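/- arXiv:2402.04062 — 10 statements merged into one kernel-verified Lean document; each statement's English description precedes it below -/
import Mathlib

section
/- Let G = (V, E, R, c) be a relational hypergraph. For every initial feature map x : V → R^{d(0)} such that c ≡ x (they induce the same partition of V), every HR-MPNN with L layers computing feature maps h^(ℓ), and every 0 ≤ ℓ ≤ L, the coloring hrwl_1^(ℓ) refines h^(ℓ), i.e. hrwl_1^(ℓ) ⪯ h^(ℓ). -/
/-- A relational hypergraph over node set `V`, relation types `R` with arities `ar`.
A hyperedge (fact) `r(u₁,…,u_k)` is a pair of a relation type `r` and the tuple of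
its nodes, of length `k = ar r`. -/
structure RelHG (V R : Type) (ar : R → ℕ) where
  edges : Finset (Σ r : R, Fin (ar r) → V)

variable {V R D : Type} {ar : R → ℕ}

/-- `E(v)`: the set of edge–position pairs `(e, i)` with `e(i) = v`. -/
def RelHG.incid [DecidableEq V] (H : RelHG V R ar) (v : V) :
    Finset (Σ e : Σ r : R, Fin (ar r) → V, Fin (ar e.1)) :=
  (H.edges.sigma fun e => (Finset.univ : Finset (Fin (ar e.1)))).filter
    fun p => p.1.2 p.2 = v

/-- Colors used by the canonical (`τ = id`) hypergraph relational 1-WL test after `ℓ`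
rounds, starting from colors in `D`. -/
def WLC (D R : Type) : ℕ → Type :=
  fun ℓ => Nat.rec D (fun _ ih => ih × Multiset (Set (ih × ℕ) × R)) ℓ

/-- The hypergraph relational 1-WL test `hrwl₁`, with the canonical injective `τ`
(pairing), starting from the node coloring `c`. -/
def RelHG.hrwl [DecidableEq V] (H : RelHG V R ar) (c : V → D) :
    (ℓ : ℕ) → V → WLC D R ℓ
  | 0 => c
  | ℓ + 1 => fun v =>
      ⟨RelHG.hrwl H c ℓ v,
        (H.incid v).val.map fun ei =>
          ({p : WLC D R ℓ × ℕ |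
              ∃ j : Fin (ar ei.1.1), j ≠ ei.2 ∧
                p = (RelHG.hrwl H c ℓ (ei.1.2 j), (j : ℕ))},
            ei.1.1)⟩

/-- A hypergraph relational MPNN (HR-MPNN): layer dimensions `d`, message spaces `M`,
aggregation spaces `A`, and arbitrary relation-specific message, aggregation and
update functions for every layer. -/
structure HRMPNN (R : Type) where
  d : ℕ → ℕ
  M : ℕ → Type
  A : ℕ → Type
  msg : (ℓ : ℕ) → R → Set ((Fin (d ℓ) → ℝ) × ℕ) → M ℓ
  agg : (ℓ : ℕ) → (Fin (d ℓ) → ℝ) → Multiset (M ℓ) → A ℓ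
  up : (ℓ : ℕ) → (Fin (d ℓ) → ℝ) → A ℓ → Fin (d (ℓ + 1)) → ℝ

/-- The feature maps `h⁽ℓ⁾` computed by an HR-MPNN on a relational hypergraph `H`
from the initial feature map `x`. -/
def HRMPNN.h [DecidableEq V] (net : HRMPNN R) (H : RelHG V R ar)
    (x : V → Fin (net.d 0) → ℝ) : (ℓ : ℕ) → V → Fin (net.d ℓ) → ℝ
  | 0 => x
  | ℓ + 1 => fun v =>
      net.up ℓ (HRMPNN.h net H x ℓ v)
        (net.agg ℓ (HRMPNN.h net H x ℓ v)
          ((H.incid v).val.map fun ei =>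
            net.msg ℓ ei.1.1
              {p : (Fin (net.d ℓ) → ℝ) × ℕ |
                ∃ j : Fin (ar ei.1.1), j ≠ ei.2 ∧
                  p = (HRMPNN.h net H x ℓ (ei.1.2 j), (j : ℕ))}))

/-- Let `G = (V, E, R, c)` be a relational hypergraph. For every
initial feature map `x` with `c ≡ x` (same partition of `V`), every HR-MPNN with `L`
layers, and every `0 ≤ ℓ ≤ L`, the coloring `hrwl₁⁽ℓ⁾` refines `h⁽ℓ⁾`. -/
theorem hrwl_refines_HRMPNN
    {V R D : Type} [Fintype V] [DecidableEq V] [Fintype R] [DecidableEq R]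
    {ar : R → ℕ} (H : RelHG V R ar) (c : V → D)
    (net : HRMPNN R) (x : V → Fin (net.d 0) → ℝ)
    (hcx : ∀ u v : V, c u = c v ↔ x u = x v)
    (L : ℕ) :
    ∀ ℓ ≤ L, ∀ u v : V,
      H.hrwl c ℓ u = H.hrwl c ℓ v → net.h H x ℓ u = net.h H x ℓ v := by
  have key : ∀ ℓ : ℕ, ∀ u v : V,
      H.hrwl c ℓ u = H.hrwl c ℓ v → net.h H x ℓ u = net.h H x ℓ v := by
    intro ℓ
    induction ℓ with
    | zero => intro u v h; exact (hcx u v).mp h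
    | succ ℓ ih =>
      classical
      set φ : WLC D R ℓ → (Fin (net.d ℓ) → ℝ) := fun col =>
        if h : ∃ w : V, H.hrwl c ℓ w = col then net.h H x ℓ h.choose
        else fun _ => 0 with hφ
      have hφ_eq : ∀ w : V, φ (H.hrwl c ℓ w) = net.h H x ℓ w := by
        intro w
        have hex : ∃ w' : V, H.hrwl c ℓ w' = H.hrwl c ℓ w := ⟨w, rfl⟩
        simp only [hφ, dif_pos hex]
        exact ih hex.choose w hex.choose_spec
      have himg : ∀ (e : Σ r : R, Fin (ar r) → V) (i : Fin (ar e.1)),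
          ((fun p : WLC D R ℓ × ℕ => (φ p.1, p.2)) ''
            {p | ∃ j : Fin (ar e.1), j ≠ i ∧ p = (H.hrwl c ℓ (e.2 j), (j : ℕ))})
          = {p : (Fin (net.d ℓ) → ℝ) × ℕ |
              ∃ j : Fin (ar e.1), j ≠ i ∧ p = (net.h H x ℓ (e.2 j), (j : ℕ))} := by
        intro e i
        ext p
        simp only [Set.mem_image, Set.mem_setOf_eq]
        constructor
        · rintro ⟨q, ⟨j, hj, rfl⟩, rfl⟩
          exact ⟨j, hj, by simp [hφ_eq]⟩
        · rintro ⟨j, hj, rfl⟩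
          exact ⟨(H.hrwl c ℓ (e.2 j), (j : ℕ)), ⟨j, hj, rfl⟩, by simp [hφ_eq]⟩
      have hmap : ∀ w : V,
          ((H.incid w).val.map fun ei =>
            net.msg ℓ ei.1.1
              {p : (Fin (net.d ℓ) → ℝ) × ℕ |
                ∃ j : Fin (ar ei.1.1), j ≠ ei.2 ∧
                  p = (net.h H x ℓ (ei.1.2 j), (j : ℕ))})
          = (((H.incid w).val.map fun ei =>
              (({p : WLC D R ℓ × ℕ |
                  ∃ j : Fin (ar ei.1.1), j ≠ ei.2 ∧
                    p = (H.hrwl c ℓ (ei.1.2 j), (j : ℕ))}, ei.1.1) :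
                Set (WLC D R ℓ × ℕ) × R)).map
              fun Sr => net.msg ℓ Sr.2 ((fun p => (φ p.1, p.2)) '' Sr.1)) := by
        intro w
        rw [Multiset.map_map]
        apply Multiset.map_congr rfl
        intro ei _
        simp only [Function.comp]
        rw [himg ei.1 ei.2]
      intro u v hw
      have h1 : H.hrwl c ℓ u = H.hrwl c ℓ v := congrArg Prod.fst hw
      have h2 : ((H.incid u).val.map fun ei =>
            (({p : WLC D R ℓ × ℕ |
                ∃ j : Fin (ar ei.1.1), j ≠ ei.2 ∧
                  p = (H.hrwl c ℓ (ei.1.2 j), (j : ℕ))}, ei.1.1) :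
              Set (WLC D R ℓ × ℕ) × R))
          = ((H.incid v).val.map fun ei =>
            (({p : WLC D R ℓ × ℕ |
                ∃ j : Fin (ar ei.1.1), j ≠ ei.2 ∧
                  p = (H.hrwl c ℓ (ei.1.2 j), (j : ℕ))}, ei.1.1) :
              Set (WLC D R ℓ × ℕ) × R)) := congrArg Prod.snd hw
      simp only [HRMPNN.h]
      rw [ih u v h1, hmap u, hmap v, h2]
  intro ℓ _ u v
  exact key ℓ u v
end

section
/- Let G = (V, E, R, c) be a relational hypergraph. For every L ≥ 0 there exist an initial feature map x : V → R^{d(0)} with c ≡ x and an HR-MPNN with L layers computing feature maps h^(ℓ) such that for all 0 ≤ ℓ ≤ L, hrwl_1^(ℓ) ≡ h^(ℓ) (the WL coloring and the feature map induce the same partition of V at every layer). -/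
variable {V R D : Type} {ar : R → ℕ}

/-!
Since `V` is finite, every WL coloring `hrwl₁⁽ℓ⁾` can be re-encoded by vectors in `ℝ¹` inducing
the same partition. Message and aggregation functions that keep their inputs symbolically make
the aggregate at `v` exactly one round of WL refinement applied to the encoded features. One
round applied to a finer coloring determines the round applied to a coarser one, so the update
can read off the encoding of the next WL color from the aggregate; by induction the network then
computes precisely these encodings.
-/

open Function

theorem exists_encoding_of_countable {V α β : Type*} [Countable V] [Infinite β] (f : V → α) :
    ∃ g : V → β, ∀ u v, g u = g v ↔ f u = f v := by
  have := (Set.countable_range f).to_subtype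
  obtain ⟨e, he⟩ := Countable.exists_injective_nat (Set.range f)
  refine ⟨fun v => Infinite.natEmbedding β (e ⟨f v, v, rfl⟩), fun u v => ?_⟩
  simp [(Infinite.natEmbedding β).injective.eq_iff, he.eq_iff, Subtype.ext_iff]

namespace RelHG

variable {V R : Type} {ar : R → ℕ} [DecidableEq V]

def round {β : Type*} (H : RelHG V R ar) (f : V → β) (v : V) :
    β × Multiset (Set (β × ℕ) × R) :=
  (f v, (H.incid v).val.map fun ei =>
    ({p | ∃ j : Fin (ar ei.1.1), j ≠ ei.2 ∧ p = (f (ei.1.2 j), (j : ℕ))}, ei.1.1))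

theorem hrwl_succ {D : Type} (H : RelHG V R ar) (c : V → D) (ℓ : ℕ) :
    H.hrwl c (ℓ + 1) = H.round (H.hrwl c ℓ) := rfl

theorem round_comp {β γ : Type*} (H : RelHG V R ar) (φ : β → γ) (f : V → β) :
    H.round (φ ∘ f) =
      Prod.map φ (Multiset.map (Prod.map (Set.image (Prod.map φ id)) id)) ∘ H.round f := by
  funext v
  simp only [round, comp_apply, Prod.map, Multiset.map_map]
  congr 1
  refine Multiset.map_congr rfl fun ei _ => Prod.ext ?_ rfl
  ext p
  simp [eq_comm (a := p)]

theorem factorsThrough_round {β γ : Type*} (H : RelHG V R ar) {f : V → β} {g : V → γ}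
    (hgf : FactorsThrough g f) : FactorsThrough (H.round g) (H.round f) := by
  intro u v huv
  have : Nonempty γ := ⟨g u⟩
  obtain ⟨φ, rfl⟩ := (factorsThrough_iff g).1 hgf
  rw [round_comp, comp_apply, comp_apply, huv]

noncomputable def wlNet (H : RelHG V R ar) (enc : ℕ → V → Fin 1 → ℝ) : HRMPNN R where
  d _ := 1
  M _ := Set ((Fin 1 → ℝ) × ℕ) × R
  A _ := (Fin 1 → ℝ) × Multiset (Set ((Fin 1 → ℝ) × ℕ) × R)
  msg _ r S := (S, r)
  agg _ h m := (h, m)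
  up ℓ _ a := extend (H.round (enc ℓ)) (enc (ℓ + 1)) 0 a

theorem wlNet_h (H : RelHG V R ar) {enc : ℕ → V → Fin 1 → ℝ}
    (henc : ∀ ℓ, FactorsThrough (enc (ℓ + 1)) (H.round (enc ℓ))) (ℓ : ℕ) :
    (H.wlNet enc).h H (enc 0) ℓ = enc ℓ := by
  induction ℓ with
  | zero => rfl
  | succ ℓ ih =>
    funext v
    change extend (H.round (enc ℓ)) (enc (ℓ + 1)) 0 (H.round ((H.wlNet enc).h H (enc 0) ℓ) v) = _
    rw [ih, (henc ℓ).extend_apply]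

end RelHG

theorem exists_HRMPNN_matching_hrwl_general
    {V R D : Type} [Fintype V] [DecidableEq V]
    {ar : R → ℕ} (H : RelHG V R ar) (c : V → D) (L : ℕ) :
    ∃ (net : HRMPNN R) (x : V → Fin (net.d 0) → ℝ),
      (∀ u v : V, c u = c v ↔ x u = x v) ∧
      ∀ ℓ ≤ L, ∀ u v : V,
        H.hrwl c ℓ u = H.hrwl c ℓ v ↔ net.h H x ℓ u = net.h H x ℓ v := by
  choose enc henc using fun ℓ => exists_encoding_of_countable (β := Fin 1 → ℝ) (H.hrwl c ℓ)
  have hstep (ℓ : ℕ) : FactorsThrough (enc (ℓ + 1)) (H.round (enc ℓ)) := by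
    intro u v huv
    rw [henc, RelHG.hrwl_succ]
    exact RelHG.factorsThrough_round H (fun a b hab => (henc ℓ a b).1 hab) huv
  refine ⟨H.wlNet enc, enc 0, fun u v => (henc 0 u v).symm, fun ℓ _ u v => ?_⟩
  rw [RelHG.wlNet_h H hstep]
  exact (henc ℓ u v).symm

/-- Let `G = (V, E, R, c)` be a relational hypergraph. For every
`L ≥ 0` there exist an initial feature map `x` with `c ≡ x` and an HR-MPNN with `L`
layers such that for all `0 ≤ ℓ ≤ L`, `hrwl₁⁽ℓ⁾ ≡ h⁽ℓ⁾` (same partition of `V` at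
every layer). -/
theorem exists_HRMPNN_matching_hrwl
    {V R D : Type} [Fintype V] [DecidableEq V] [Fintype R] [DecidableEq R]
    {ar : R → ℕ} (H : RelHG V R ar) (c : V → D) (L : ℕ) :
    ∃ (net : HRMPNN R) (x : V → Fin (net.d 0) → ℝ),
      (∀ u v : V, c u = c v ↔ x u = x v) ∧
      ∀ ℓ ≤ L, ∀ u v : V,
        H.hrwl c ℓ u = H.hrwl c ℓ v ↔ net.h H x ℓ u = net.h H x ℓ v :=
  exists_HRMPNN_matching_hrwl_general H c L
end

section
/- Let G = (V, E, R, c) be a relational hypergraph with |V| = n, maximum edge arity m, and L ≥ 0. Then there exist a family of feature maps h^(ℓ) : V → R^{nm} (0 ≤ ℓ ≤ L), matrices W^(ℓ) and, for each relation r ∈ R, matrices W_r^(ℓ), Y_r^(ℓ) (0 ≤ ℓ < L), and positional encoding vectors p_1, …, p_m ∈ R^{nm}, such that: (i) h^(ℓ) ≡ hrwl_1^(ℓ) for all 0 ≤ ℓ ≤ L; (ii) every h_v^(ℓ) is a column of the matrix Fts; and (iii) for all 0 ≤ ℓ < L and v ∈ V, h_v^(ℓ+1) = sign(W^(ℓ)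 [h_v^(ℓ) ∥ Σ_{(e,i) ∈ E(v)} Y_{ρ(e)}^(ℓ) sign(W_{ρ(e)}^(ℓ) (⊙_{j ≠ i} (h_{e(j)}^(ℓ) + p_j)) − 1)] − 1), where ∥ is vector concatenation, ⊙ is componentwise product, sign is applied entrywise, and subtracting 1 means subtracting the all-ones vector. -/
variable {V R D : Type} {ar : R → ℕ}

/-- The sign function: `1` on positive reals, `-1` otherwise. -/
noncomputable def sgn (x : ℝ) : ℝ := if 0 < x then 1 else -1

/-- The `(nm × n)`-matrix `Fts` with `(Fts)_{ij} = -1` if `m·j ≥ i` and `1` otherwise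
(`1`-based indexing, as in the paper). -/
def Fts (n m : ℕ) : Matrix (Fin (n * m)) (Fin n) ℝ :=
  Matrix.of fun i j => if (i : ℕ) + 1 ≤ m * ((j : ℕ) + 1) then -1 else 1

/-!
Colors are carried as columns of `Fts`: `h_v = Fts_{col v}` for some `col : V → Fin n` with the
same kernel as `hrwl₁` (there are at most `n` color classes). With `p_j = 2` off the coordinates
`≡ j (mod m)` and `0` on them, every factor of `⊙_{j ≠ i} (h_{e(j)} + p_j)` is positive except the
one at position `idx % m`, so the sign pattern of the product spells out the missing position `i`
and the colors of all other positions, i.e. the colored positional neighborhood.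
A sign layer `x ↦ Y sign(W x - 1)` interpolates any function on finitely many vectors (compose an
injective linear functional with step functions), so each relation gets a network sending these
vectors to indicator vectors of message codes; summing over `E(v)` counts the multiset of messages.
Finally, the constant coordinate `-1` of `Fts` lets an injective functional of
`[h_v ∥ messages]` be shifted below `-1`, and thresholding it at its sorted values yields exactly
the `Fts`-column of its rank, which is the new color.
-/

open Finset Matrix

lemma sgn_inv_mul_sub_one_of_neg {t : ℝ} (ht : t < 0) (z : ℝ) :
    sgn (t⁻¹ * z - 1) = if z < t then 1 else -1 := by
  have key : 0 < t⁻¹ * z - 1 ↔ z < t := by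
    rw [sub_pos, ← div_eq_inv_mul, one_lt_div_of_neg ht]
  by_cases hz : z < t
  · rw [if_pos hz, sgn, if_pos (key.2 hz)]
  · rw [if_neg hz, sgn, if_neg (mt key.1 hz)]

lemma sgn_mul_sgn_inv_mul_sub_one {θ z : ℝ} (hθ : θ ≠ 0) (hz : z ≠ θ) :
    sgn θ * sgn (θ⁻¹ * z - 1) = if θ < z then 1 else -1 := by
  rcases hθ.lt_or_gt with hneg | hpos
  · rw [sgn_inv_mul_sub_one_of_neg hneg, sgn, if_neg hneg.not_gt]
    rcases hz.lt_or_gt with h | h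
    · rw [if_pos h, if_neg h.not_gt]; norm_num
    · rw [if_neg h.not_gt, if_pos h]; norm_num
  · have key : 0 < θ⁻¹ * z - 1 ↔ θ < z := by
      rw [sub_pos, ← div_eq_inv_mul, one_lt_div hpos]
    rw [sgn, if_pos hpos, one_mul]
    by_cases h : θ < z
    · rw [if_pos h, sgn, if_pos (key.2 h)]
    · rw [if_neg h, sgn, if_neg (mt key.1 h)]

noncomputable def sgnLayer {ι κ : Type*} [Fintype ι] (A : Matrix κ ι ℝ) (x : ι → ℝ) : κ → ℝ :=
  fun k => sgn ((A *ᵥ x) k - 1)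

lemma Module.Dual.exists_injOn {K M : Type*} [Field K] [Infinite K] [AddCommGroup M]
    [Module K M] {P : Set M} (hP : P.Finite) : ∃ f : Module.Dual K M, Set.InjOn f P := by
  have := hP.to_subtype
  obtain ⟨f, hf⟩ := Module.exists_dual_forall_apply_ne_zero (K := K)
    (fun q : {q : P × P // q.1 ≠ q.2} => (q.1.1 : M) - q.1.2)
    fun q => sub_ne_zero.2 fun h => q.2 (Subtype.ext h)
  refine ⟨f, fun x hx y hy hxy => by_contra fun hne => ?_⟩
  exact hf ⟨(⟨x, hx⟩, ⟨y, hy⟩), by simpa using hne⟩ (by simp [hxy])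

lemma exists_dotProduct_injOn {ι : Type*} [Fintype ι] [DecidableEq ι] {P : Set (ι → ℝ)}
    (hP : P.Finite) : ∃ w : ι → ℝ, Set.InjOn (w ⬝ᵥ ·) P := by
  obtain ⟨f, hf⟩ := Module.Dual.exists_injOn (K := ℝ) hP
  refine ⟨(dotProductEquiv ℝ ι).symm f, fun x hx y hy hxy => hf hx hy ?_⟩
  rw [← (dotProductEquiv ℝ ι).apply_symm_apply f]
  exact hxy

lemma exists_ne_zero_between {s : Finset ℝ} {b : ℝ} (h : ∀ x ∈ s, x < b) :
    ∃ θ ≠ 0, (∀ x ∈ s, x < θ) ∧ θ < b := by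
  obtain ⟨lo, hlo, hlob⟩ : ∃ lo, (∀ x ∈ s, x ≤ lo) ∧ lo < b := by
    rcases s.eq_empty_or_nonempty with rfl | hs
    · exact ⟨b - 1, by simp, by linarith⟩
    · exact ⟨s.max' hs, fun x hx => s.le_max' x hx, (s.max'_lt_iff hs).2 h⟩
  obtain ⟨θ, ⟨hloθ, hθb⟩, hθ0⟩ :=
    ((Set.Ioo_infinite hlob).sdiff (Set.finite_singleton 0)).nonempty
  exact ⟨θ, hθ0, fun x hx => (hlo x hx).trans_lt hloθ, hθb⟩

lemma sgn_smul_add_sgn_smul_eq_ite {θ z : ℝ} (hθ : θ ≠ 0) (hz : z ≠ θ) {E : Type*}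
    [AddCommGroup E] [Module ℝ E] (d : E) :
    sgn (θ⁻¹ * z - 1) • (sgn θ / 2) • d + sgn (0 * z - 1) • (-(1 / 2 : ℝ)) • d =
      if θ < z then d else 0 := by
  have hs := sgn_mul_sgn_inv_mul_sub_one hθ hz
  have h0 : sgn (0 * z - 1) = -1 := by norm_num [sgn]
  rw [smul_smul, smul_smul, ← add_smul, h0]
  split_ifs at hs ⊢
  · conv_rhs => rw [← one_smul ℝ d]
    congr 1; linear_combination hs / 2
  · rw [← zero_smul ℝ d]
    congr 1; linear_combination hs / 2

/-- Insert the points in increasing order of `y`; the step added for a new point sits just below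
it, so it vanishes on the earlier points. -/
theorem exists_sum_sgn_smul_eq {α E : Type*} [AddCommGroup E] [Module ℝ E] (y : α → ℝ)
    (s : Finset α) (hy : Set.InjOn y s) (f : α → E) :
    ∃ (N : ℕ) (a : Fin N → ℝ) (c : Fin N → E),
      ∀ x ∈ s, ∑ k, sgn (a k * y x - 1) • c k = f x := by
  classical
  induction s using Finset.induction_on_max_value y with
  | empty => exact ⟨0, Fin.elim0, Fin.elim0, by simp⟩
  | insert a s ha hmax ih =>
    obtain ⟨N, A, C, hC⟩ := ih (hy.mono (by simp))
    have hlt : ∀ x ∈ s, y x < y a := fun x hx => (hmax x hx).lt_of_ne fun h =>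
      ha (hy (by simp [hx]) (by simp) h ▸ hx)
    obtain ⟨θ, hθ0, hsθ, hθa⟩ :=
      exists_ne_zero_between (s := s.image y) (b := y a) (by simpa using hlt)
    set d := f a - ∑ k, sgn (A k * y a - 1) • C k
    refine ⟨N + 2, Fin.cons θ⁻¹ (Fin.cons 0 A),
      Fin.cons ((sgn θ / 2) • d) (Fin.cons (-(1 / 2 : ℝ) • d) C), fun x hx => ?_⟩
    simp only [Fin.sum_univ_succ, Fin.cons_zero, Fin.cons_succ]
    rcases mem_insert.1 hx with rfl | hx
    · rw [← add_assoc, sgn_smul_add_sgn_smul_eq_ite hθ0 hθa.ne' d, if_pos hθa]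
      exact sub_add_cancel _ _
    · have hxθ : y x < θ := hsθ _ (mem_image_of_mem y hx)
      rw [← add_assoc, sgn_smul_add_sgn_smul_eq_ite hθ0 hxθ.ne d, if_neg hxθ.not_gt,
        zero_add, hC x hx]

theorem exists_sgnLayer_interpolation {ι κ : Type*} [Fintype ι] [DecidableEq ι]
    (P : Finset (ι → ℝ)) (f : (ι → ℝ) → κ → ℝ) :
    ∃ (N : ℕ) (A : Matrix (Fin N) ι ℝ) (Y : Matrix κ (Fin N) ℝ),
      ∀ x ∈ P, Y *ᵥ sgnLayer A x = f x := by
  obtain ⟨w, hw⟩ := exists_dotProduct_injOn P.finite_toSet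
  obtain ⟨N, a, c, hc⟩ := exists_sum_sgn_smul_eq (w ⬝ᵥ ·) P hw f
  refine ⟨N, Matrix.of fun k => a k • w, (Matrix.of c)ᵀ, fun x hx => ?_⟩
  rw [mulVec_transpose, vecMul_eq_sum, ← hc x hx]
  refine sum_congr rfl fun k _ => ?_
  simp only [sgnLayer, mulVec, of_apply, smul_dotProduct, smul_eq_mul]
  rfl

lemma exists_dotProduct_eq_iff_and_le_neg_one {ι : Type*} [Fintype ι] {d : ℕ}
    (x : ι → Fin d → ℝ) (b₀ : Fin d) (hb : ∀ v, x v b₀ = -1) :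
    ∃ w : Fin d → ℝ, (∀ u v, w ⬝ᵥ x u = w ⬝ᵥ x v ↔ x u = x v) ∧ ∀ v, w ⬝ᵥ x v ≤ -1 := by
  obtain ⟨w₀, hw₀⟩ := exists_dotProduct_injOn (Set.finite_range x)
  set C := 1 + ∑ v, |w₀ ⬝ᵥ x v|
  have hdot : ∀ v, (w₀ + C • Pi.single b₀ 1) ⬝ᵥ x v = w₀ ⬝ᵥ x v - C := fun v => by
    rw [add_dotProduct, smul_dotProduct, single_dotProduct, hb, smul_eq_mul]
    ring
  refine ⟨w₀ + C • Pi.single b₀ 1, fun u v => ?_, fun v => ?_⟩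
  · rw [hdot, hdot, sub_left_inj]
    exact ⟨fun h => hw₀ ⟨u, rfl⟩ ⟨v, rfl⟩ h, fun h => by rw [h]⟩
  · have h₁ := single_le_sum (f := fun v => |w₀ ⬝ᵥ x v|) (fun _ _ => abs_nonneg _) (mem_univ v)
    have h₂ := le_abs_self (w₀ ⬝ᵥ x v)
    rw [hdot]
    linarith

lemma exists_rank_threshold {ι : Type*} [Fintype ι] {n : ℕ} (hcard : Fintype.card ι ≤ n)
    (y : ι → ℝ) (hy : ∀ v, y v ≤ -1) :
    ∃ (rk : ι → Fin n) (t : ℕ → ℝ), (∀ u v, rk u = rk v ↔ y u = y v) ∧ (∀ k, t k < 0) ∧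
      ∀ k v, (rk v : ℕ) < k ↔ y v < t k := by
  classical
  set S := univ.image y
  have hS : S.card ≤ n := card_image_le.trans (by simpa using hcard)
  have hyS : ∀ v, y v ∈ S := fun v => mem_image_of_mem y (mem_univ v)
  have hSneg : ∀ z ∈ S, z ≤ -1 := by
    simp only [S, mem_image, mem_univ, true_and, forall_exists_index, forall_apply_eq_imp_iff]
    exact hy
  let e := S.orderIsoOfFin rfl
  let r : ι → Fin S.card := fun v => e.symm ⟨y v, hyS v⟩
  have her : ∀ v, (e (r v) : ℝ) = y v := fun v => by simp [r]
  refine ⟨fun v => Fin.castLE hS (r v), fun k => if h : k < S.card then e ⟨k, h⟩ else -1 / 2,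
    fun u v => ?_, fun k => ?_, fun k v => ?_⟩
  · rw [(Fin.castLE_injective hS).eq_iff, e.symm.injective.eq_iff, Subtype.mk.injEq]
  · dsimp only
    split_ifs with hk
    · linarith [hSneg _ (e ⟨k, hk⟩).2]
    · norm_num
  · simp only [Fin.val_castLE]
    split_ifs with hk
    · rw [← her, Subtype.coe_lt_coe, e.lt_iff_lt, ← Fin.val_fin_lt]
    · exact iff_of_true ((r v).2.trans_le (not_lt.1 hk)) (by linarith [hy v])

lemma Fts_apply {n m : ℕ} (i : Fin (n * m)) (j : Fin n) :
    Fts n m i j = if (i : ℕ) / m ≤ j then -1 else 1 := by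
  have hm : 0 < m := Nat.pos_of_ne_zero fun h => by subst h; exact i.elim0
  have : (i : ℕ) + 1 ≤ m * (j + 1) ↔ (i : ℕ) / m ≤ j := by
    rw [Nat.add_one_le_iff, ← Nat.lt_add_one_iff, Nat.div_lt_iff_lt_mul hm, mul_comm m]
  simp only [Fts, of_apply, this]

lemma Fts_transpose_injective {n m : ℕ} (hm : 0 < m) : Function.Injective (Fts n m)ᵀ := by
  have key : ∀ a b : Fin n, (Fts n m)ᵀ a = (Fts n m)ᵀ b → a ≤ b := by
    intro a b h
    have hlt : m * a < n * m := by rw [mul_comm n]; exact Nat.mul_lt_mul_of_pos_left a.2 hm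
    have := congrFun h ⟨m * a, hlt⟩
    simp only [transpose_apply, Fts_apply, Nat.mul_div_cancel_left _ hm, le_refl,
      if_true] at this
    split_ifs at this with hab
    · exact hab
    · norm_num at this
  exact fun a b h => le_antisymm (key a b h) (key b a h.symm)

/-- Row `i` of `W` thresholds the functional `w ⬝ᵥ x ≤ -1` at its `(i / m)`-th smallest value,
so the output is the `Fts`-column of the rank of `w ⬝ᵥ x`. -/
theorem exists_sgnLayer_eq_Fts {ι : Type*} [Fintype ι] {d n : ℕ} (m : ℕ)
    (hcard : Fintype.card ι ≤ n) (x : ι → Fin d → ℝ) (b₀ : Fin d) (hb : ∀ v, x v b₀ = -1) :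
    ∃ (W : Matrix (Fin (n * m)) (Fin d) ℝ) (cl : ι → Fin n),
      (∀ u v, cl u = cl v ↔ x u = x v) ∧ ∀ v, (Fts n m)ᵀ (cl v) = sgnLayer W (x v) := by
  obtain ⟨w, hw, hwneg⟩ := exists_dotProduct_eq_iff_and_le_neg_one x b₀ hb
  obtain ⟨rk, t, hrk, ht, hrkt⟩ := exists_rank_threshold hcard (fun v => w ⬝ᵥ x v) hwneg
  refine ⟨Matrix.of fun i => (t ((i : ℕ) / m))⁻¹ • w, rk, fun u v => (hrk u v).trans (hw u v),
    fun v => funext fun i => ?_⟩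
  simp only [transpose_apply, Fts_apply, sgnLayer, mulVec, of_apply, smul_dotProduct,
    smul_eq_mul]
  rw [sgn_inv_mul_sub_one_of_neg (ht _)]
  by_cases h : (i : ℕ) / m ≤ rk v
  · rw [if_pos h, if_neg ((hrkt _ v).not.1 (not_lt.2 h))]
  · rw [if_neg h, if_pos ((hrkt _ v).1 (not_le.1 h))]

def posEnc (n m j : ℕ) (idx : Fin (n * m)) : ℝ := if (idx : ℕ) % m = j then 0 else 2

/-- `⊙_{j ≠ i} (h_{e(j)} + p_j)` for the features `h_{e(j)} = Fts_{c j}`. -/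
noncomputable def prodEncode (n m : ℕ) {a : ℕ} (c : Fin a → Fin n) (i : Fin a) :
    Fin (n * m) → ℝ :=
  fun idx => ∏ j ∈ univ.filter (fun j => j ≠ i), (Fts n m idx (c j) + posEnc n m j idx)

lemma Fts_add_posEnc_pos {n m j : ℕ} {idx : Fin (n * m)} (hj : (idx : ℕ) % m ≠ j) (c : Fin n) :
    0 < Fts n m idx c + posEnc n m j idx := by
  rw [posEnc, if_neg hj, Fts_apply]
  split_ifs <;> norm_num

/-- Only the factor of the position `idx % m` can be negative, and then it is `Fts_{c j}`. -/
lemma prodEncode_neg_iff {n m a : ℕ} (c : Fin a → Fin n) (i : Fin a) (idx : Fin (n * m)) :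
    prodEncode n m c i idx < 0 ↔ ∃ j ≠ i, (j : ℕ) = idx % m ∧ (idx : ℕ) / m ≤ c j := by
  by_cases hex : ∃ j ≠ i, (j : ℕ) = idx % m
  · obtain ⟨j₀, hj₀i, hj₀⟩ := hex
    have hunique : ∀ j : Fin a, (j : ℕ) = idx % m → j = j₀ := fun j hj =>
      Fin.ext (hj.trans hj₀.symm)
    have hrest : 0 < ∏ j ∈ (univ.filter (fun j => j ≠ i)).erase j₀,
        (Fts n m idx (c j) + posEnc n m j idx) :=
      prod_pos fun j hj => Fts_add_posEnc_pos (fun h => (mem_erase.1 hj).1 (hunique j h.symm)) _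
    rw [prodEncode, ← mul_prod_erase (univ.filter (fun j => j ≠ i)) _ (by simpa using hj₀i),
      posEnc, if_pos hj₀.symm, add_zero, (show ∀ x : ℝ, x * _ < 0 ↔ x < 0 from fun x =>
        ⟨fun h => neg_of_mul_neg_left h hrest.le, fun h => mul_neg_of_neg_of_pos h hrest⟩),
      Fts_apply]
    constructor
    · intro h
      refine ⟨j₀, hj₀i, hj₀, ?_⟩
      by_contra hle
      rw [if_neg hle] at h
      norm_num at h
    · rintro ⟨j, -, hj, hle⟩
      rw [hunique j hj] at hle
      rw [if_pos hle]
      norm_num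
  · simp only [not_exists, not_and] at hex
    refine iff_of_false (not_lt.2 (prod_pos fun j hj => Fts_add_posEnc_pos ?_ _).le) ?_
    · exact fun h => hex j (mem_filter.1 hj).2 h.symm
    · rintro ⟨j, hji, hj, -⟩
      exact hex j hji hj

lemma prodEncode_finProdFinEquiv_neg_iff {n m a : ℕ} (ha : a ≤ m) (c : Fin a → Fin n)
    (i j : Fin a) (b : Fin n) :
    prodEncode n m c i (finProdFinEquiv (b, Fin.castLE ha j)) < 0 ↔ j ≠ i ∧ b ≤ c j := by
  have hjm : (j : ℕ) < m := j.2.trans_le ha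
  have hval : ((finProdFinEquiv (b, Fin.castLE ha j) : Fin (n * m)) : ℕ) = j + m * b := rfl
  have hmod : (j + m * b) % m = j := by rw [Nat.add_mul_mod_self_left, Nat.mod_eq_of_lt hjm]
  have hdiv : (j + m * b) / m = b := by
    rw [Nat.add_mul_div_left _ _ (by omega), Nat.div_eq_of_lt hjm, zero_add]
  rw [prodEncode_neg_iff, hval, hmod, hdiv]
  constructor
  · rintro ⟨j', hj'i, hj', hle⟩
    obtain rfl : j' = j := Fin.ext hj'
    exact ⟨hj'i, hle⟩
  · rintro ⟨hji, hle⟩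
    exact ⟨j, hji, rfl, hle⟩

/-- The coordinates `j + m * 0` reveal the missing position `i`; for `j ≠ i`, the color `c j` is
the largest `b` with a negative coordinate `j + m * b`. -/
theorem prodEncode_eq_iff {n m a : ℕ} (ha : a ≤ m) (c c' : Fin a → Fin n) (i i' : Fin a) :
    prodEncode n m c i = prodEncode n m c' i' ↔ i = i' ∧ ∀ j ≠ i, c j = c' j := by
  constructor
  · intro heq
    have key : ∀ j b, (j ≠ i ∧ b ≤ c j) ↔ (j ≠ i' ∧ b ≤ c' j) := fun j b => by
      rw [← prodEncode_finProdFinEquiv_neg_iff ha, ← prodEncode_finProdFinEquiv_neg_iff ha, heq]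
    obtain rfl : i = i' := by
      by_contra hii
      exact ((key i' (c i')).1 ⟨Ne.symm hii, le_rfl⟩).1 rfl
    exact ⟨rfl, fun j hj => eq_of_forall_le_iff fun b => by simpa [hj] using key j b⟩
  · rintro ⟨rfl, h⟩
    funext idx
    exact prod_congr rfl fun j hj => by rw [h j (mem_filter.1 hj).2]

theorem Multiset.map_eq_map_of_factorsThrough_on {α β γ : Type*} {f : α → β} {g : α → γ}
    {S : Set α} (h : ∀ a ∈ S, ∀ b ∈ S, f a = f b → g a = g b) {s t : Multiset α}
    (hs : ∀ a ∈ s, a ∈ S) (ht : ∀ a ∈ t, a ∈ S) (hst : s.map f = t.map f) :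
    s.map g = t.map g := by
  classical
  rcases S.eq_empty_or_nonempty with rfl | ⟨a₀, -⟩
  · rw [eq_zero_of_forall_notMem hs, eq_zero_of_forall_notMem ht]
  · let G : β → γ := fun y => if hy : ∃ a ∈ S, f a = y then g hy.choose else g a₀
    have hG : ∀ a ∈ S, G (f a) = g a := fun a ha => by
      have hy : ∃ b ∈ S, f b = f a := ⟨a, ha, rfl⟩
      simp only [G, dif_pos hy]
      exact h _ hy.choose_spec.1 _ ha hy.choose_spec.2
    have key : ∀ u : Multiset α, (∀ a ∈ u, a ∈ S) → u.map g = (u.map f).map G := fun u hu => by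
      rw [map_map]
      exact map_congr rfl fun a ha => (hG a (hu a ha)).symm
    rw [key s hs, key t ht, hst]

theorem Multiset.map_eq_map_iff_of_eq_iff_on {α β γ : Type*} {f : α → β} {g : α → γ}
    {S : Set α} (h : ∀ a ∈ S, ∀ b ∈ S, f a = f b ↔ g a = g b) {s t : Multiset α}
    (hs : ∀ a ∈ s, a ∈ S) (ht : ∀ a ∈ t, a ∈ S) : s.map f = t.map f ↔ s.map g = t.map g :=
  ⟨map_eq_map_of_factorsThrough_on (fun a ha b hb => (h a ha b hb).1) hs ht,
    map_eq_map_of_factorsThrough_on (fun a ha b hb => (h a ha b hb).2) hs ht⟩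

lemma Multiset.sum_map_single_one_apply {κ : Type*} [DecidableEq κ] (S : Multiset κ) (b : κ) :
    (S.map fun a => Pi.single a (1 : ℝ)).sum b = S.count b := by
  induction S using Multiset.induction_on with
  | empty => simp
  | cons a S ih =>
    rw [map_cons, sum_cons, Pi.add_apply, ih, count_cons, Pi.single_apply]
    split_ifs <;> simp [add_comm]

lemma Multiset.sum_map_single_one_injective {κ : Type*} [DecidableEq κ] :
    Function.Injective fun S : Multiset κ => (S.map fun a => Pi.single a (1 : ℝ)).sum := by
  intro S S' h
  ext b
  have := congrFun h b
  simp only [sum_map_single_one_apply] at this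
  exact_mod_cast this

lemma Finset.exists_injOn_fin {α : Type*} (Q : Finset α) :
    ∃ (s : ℕ) (g : α → Fin s), Set.InjOn g Q := by
  classical
  refine ⟨Q.card + 1, fun x => if hx : x ∈ Q then (Q.equivFin ⟨x, hx⟩).castSucc else Fin.last _,
    fun x hx y hy hxy => ?_⟩
  simp only [dif_pos (show x ∈ Q from hx), dif_pos (show y ∈ Q from hy)] at hxy
  simpa using Q.equivFin.injective (Fin.castSucc_injective _ hxy)

/-- The colors `{(f (e j), j) | j ≠ i}` of the positional neighborhood `N_i(e)`. -/
def coloredNbhd {κ : Type*} (f : V → κ) (ei : Σ e : Σ r : R, Fin (ar r) → V, Fin (ar e.1)) :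
    Set (κ × ℕ) :=
  {p | ∃ j : Fin (ar ei.1.1), j ≠ ei.2 ∧ p = (f (ei.1.2 j), (j : ℕ))}

/-- One round of `hrwl₁` applied to an arbitrary node coloring `f`. -/
def RelHG.refine [DecidableEq V] {κ : Type*} (H : RelHG V R ar) (f : V → κ) (v : V) :
    κ × Multiset (Set (κ × ℕ) × R) :=
  (f v, (H.incid v).val.map fun ei => (coloredNbhd f ei, ei.1.1))

lemma coloredNbhd_subset_of_ker {κ κ' : Type*} {f : V → κ} {g : V → κ'}
    (hfg : ∀ u v, f u = f v → g u = g v) {ei ei' : Σ e : Σ r : R, Fin (ar r) → V, Fin (ar e.1)}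
    (h : coloredNbhd f ei = coloredNbhd f ei') : coloredNbhd g ei ⊆ coloredNbhd g ei' := by
  rintro _ ⟨j, hj, rfl⟩
  obtain ⟨j', hj', hjj'⟩ : (f (ei.1.2 j), (j : ℕ)) ∈ coloredNbhd f ei' := h ▸ ⟨j, hj, rfl⟩
  obtain ⟨hf, hpos⟩ := Prod.mk.inj hjj'
  exact ⟨j', hj', by rw [hfg _ _ hf, hpos]⟩

lemma coloredNbhd_eq_iff_of_ker {κ κ' : Type*} {f : V → κ} {g : V → κ'}
    (hfg : ∀ u v, f u = f v ↔ g u = g v) (ei ei' : Σ e : Σ r : R, Fin (ar r) → V, Fin (ar e.1)) :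
    coloredNbhd f ei = coloredNbhd f ei' ↔ coloredNbhd g ei = coloredNbhd g ei' :=
  ⟨fun h => (coloredNbhd_subset_of_ker (fun u v => (hfg u v).1) h).antisymm
      (coloredNbhd_subset_of_ker (fun u v => (hfg u v).1) h.symm),
    fun h => (coloredNbhd_subset_of_ker (fun u v => (hfg u v).2) h).antisymm
      (coloredNbhd_subset_of_ker (fun u v => (hfg u v).2) h.symm)⟩

lemma RelHG.refine_eq_iff_of_ker [DecidableEq V] {κ κ' : Type*} (H : RelHG V R ar)
    {f : V → κ} {g : V → κ'} (hfg : ∀ u v, f u = f v ↔ g u = g v) (u v : V) :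
    H.refine f u = H.refine f v ↔ H.refine g u = H.refine g v := by
  simp only [RelHG.refine, Prod.mk.injEq, hfg u v]
  refine and_congr_right fun _ => Multiset.map_eq_map_iff_of_eq_iff_on (S := Set.univ)
    (fun ei _ ei' _ => ?_) (fun _ _ => trivial) (fun _ _ => trivial)
  simp only [Prod.mk.injEq, coloredNbhd_eq_iff_of_ker hfg]

lemma coloredNbhd_mk_eq_iff {κ : Type*} (f : V → κ) {r : R} {e e' : Fin (ar r) → V}
    {i i' : Fin (ar r)} :
    coloredNbhd f ⟨⟨r, e⟩, i⟩ = coloredNbhd f ⟨⟨r, e'⟩, i'⟩ ↔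
      i = i' ∧ ∀ j ≠ i, f (e j) = f (e' j) := by
  constructor
  · intro h
    have hii : i = i' := by
      by_contra hii
      obtain ⟨j, hj, hij⟩ : (f (e' i), (i : ℕ)) ∈ coloredNbhd f ⟨⟨r, e⟩, i⟩ := h ▸ ⟨i, hii, rfl⟩
      exact hj (Fin.ext (Prod.mk.inj hij).2.symm)
    refine ⟨hii, fun j hj => ?_⟩
    obtain ⟨j', -, hjj'⟩ : (f (e j), (j : ℕ)) ∈ coloredNbhd f ⟨⟨r, e'⟩, i'⟩ := h ▸ ⟨j, hj, rfl⟩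
    obtain ⟨hf, hpos⟩ := Prod.mk.inj hjj'
    rwa [show j' = j from Fin.ext hpos.symm] at hf
  · rintro ⟨rfl, h⟩
    ext p
    constructor
    · rintro ⟨j, hj, rfl⟩
      exact ⟨j, hj, by rw [h j hj]⟩
    · rintro ⟨j, hj, rfl⟩
      exact ⟨j, hj, by rw [h j hj]⟩

lemma RelHG.mem_edges_of_mem_incid [DecidableEq V] (H : RelHG V R ar) {v : V}
    {ei : Σ e : Σ r : R, Fin (ar r) → V, Fin (ar e.1)} (h : ei ∈ H.incid v) : ei.1 ∈ H.edges :=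
  (mem_sigma.1 (mem_filter.1 h).1).1

/-- The aggregated messages of the update rule, for the features `h_u = Fts_{col u}`. -/
noncomputable def RelHG.aggregate [DecidableEq V] (H : RelHG V R ar) {n m s : ℕ} {t : R → ℕ}
    (Wr : ∀ r, Matrix (Fin (t r)) (Fin (n * m)) ℝ) (Y : ∀ r, Matrix (Fin s) (Fin (t r)) ℝ)
    (col : V → Fin n) (v : V) : Fin s → ℝ :=
  ∑ ei ∈ H.incid v, Y ei.1.1 *ᵥ sgnLayer (Wr ei.1.1) (prodEncode n m (fun j => col (ei.1.2 j)) ei.2)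

/-- The network of relation `r` sends the message vector of `(e, i)` to the indicator vector of a
code of `(r, prodEncode …)`; by `prodEncode_eq_iff` the code determines the colored neighborhood,
and the sum over `E(v)` counts the codes. -/
theorem RelHG.exists_aggregate_eq_iff [DecidableEq V] (H : RelHG V R ar) (n m : ℕ)
    (hm : ∀ e ∈ H.edges, ar e.1 ≤ m) :
    ∃ (s : ℕ) (t : R → ℕ) (Wr : ∀ r, Matrix (Fin (t r)) (Fin (n * m)) ℝ)
      (Y : ∀ r, Matrix (Fin s) (Fin (t r)) ℝ), ∀ (col : V → Fin n) (u v : V),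
      H.aggregate Wr Y col u = H.aggregate Wr Y col v ↔
        (H.refine col u).2 = (H.refine col v).2 := by
  classical
  let P : R → Finset (Fin (n * m) → ℝ) := fun r =>
    univ.image fun q : (Fin (ar r) → Fin n) × Fin (ar r) => prodEncode n m q.1 q.2
  let Q := H.edges.biUnion fun e => (P e.1).image (Prod.mk e.1)
  have hPQ : ∀ e ∈ H.edges, ∀ (c : Fin (ar e.1) → Fin n) (i : Fin (ar e.1)),
      (e.1, prodEncode n m c i) ∈ Q := fun e he c i =>
    mem_biUnion.2 ⟨e, he, mem_image_of_mem _ (mem_image_of_mem _ (mem_univ (c, i)))⟩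
  obtain ⟨s, g, hg⟩ := Q.exists_injOn_fin
  choose t Wr Y hY using fun r =>
    exists_sgnLayer_interpolation (P r) fun x => Pi.single (g (r, x)) (1 : ℝ)
  refine ⟨s, t, Wr, Y, fun col u v => ?_⟩
  let code := fun ei : Σ e : Σ r : R, Fin (ar r) → V, Fin (ar e.1) =>
    g (ei.1.1, prodEncode n m (fun j => col (ei.1.2 j)) ei.2)
  have hsum : ∀ w, H.aggregate Wr Y col w =
      (((H.incid w).val.map code).map fun a => Pi.single a (1 : ℝ)).sum := fun w => by
    rw [RelHG.aggregate, Multiset.map_map, sum_eq_multiset_sum]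
    exact congrArg _ (Multiset.map_congr rfl fun ei _ =>
      hY _ _ (mem_image_of_mem _ (mem_univ (_, ei.2))))
  rw [hsum, hsum, Multiset.sum_map_single_one_injective.eq_iff]
  refine Multiset.map_eq_map_iff_of_eq_iff_on (S := {ei | ei.1 ∈ H.edges}) ?_
    (fun _ => H.mem_edges_of_mem_incid) (fun _ => H.mem_edges_of_mem_incid)
  rintro ⟨⟨r, e⟩, i⟩ he ⟨⟨r', e'⟩, i'⟩ he'
  simp only [code, hg.eq_iff (hPQ _ he _ _) (hPQ _ he' _ _), Prod.mk.injEq]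
  constructor
  · rintro ⟨rfl, h⟩
    exact ⟨(coloredNbhd_mk_eq_iff col).2 ((prodEncode_eq_iff (hm _ he) _ _ _ _).1 h), rfl⟩
  · rintro ⟨h, rfl⟩
    exact ⟨rfl, (prodEncode_eq_iff (hm _ he) _ _ _ _).2 ((coloredNbhd_mk_eq_iff col).1 h)⟩

lemma Fin.append_eq_append_iff {α : Type*} {k l : ℕ} {a a' : Fin k → α} {b b' : Fin l → α} :
    Fin.append a b = Fin.append a' b' ↔ a = a' ∧ b = b' :=
  ((Fin.appendEquiv k l).injective.eq_iff (a := (a, b)) (b := (a', b'))).trans Prod.mk_inj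

lemma exists_fin_eq_iff {ι κ : Type*} [Fintype ι] (f : ι → κ) {n : ℕ}
    (h : Fintype.card ι ≤ n) : ∃ cl : ι → Fin n, ∀ u v, cl u = cl v ↔ f u = f v := by
  classical
  refine ⟨fun v => Fin.castLE ((Fintype.card_range_le f).trans h)
    (Fintype.equivFin (Set.range f) ⟨f v, Set.mem_range_self v⟩), fun u v => ?_⟩
  rw [(Fin.castLE_injective _).eq_iff, (Fintype.equivFin _).injective.eq_iff, Subtype.mk.injEq]

theorem exists_seq_of_forall_exists_succ {X W : Type*} {P : ℕ → X → Prop}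
    {S : ℕ → X → X → W → Prop} {x₀ : X} (h₀ : P 0 x₀)
    (step : ∀ ℓ x, P ℓ x → ∃ y w, P (ℓ + 1) y ∧ S ℓ x y w) :
    ∃ (x : ℕ → X) (w : ℕ → W), ∀ ℓ, P ℓ (x ℓ) ∧ S ℓ (x ℓ) (x (ℓ + 1)) (w ℓ) := by
  have step' : ∀ ℓ (x : {x // P ℓ x}), ∃ y : {y // P (ℓ + 1) y}, ∃ w, S ℓ x y w := fun ℓ x => by
    obtain ⟨y, w, hy, hS⟩ := step ℓ x.1 x.2
    exact ⟨⟨y, hy⟩, w, hS⟩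
  choose F G hFG using step'
  let x (ℓ : ℕ) : {x // P ℓ x} := Nat.rec (motive := fun ℓ => {x // P ℓ x}) ⟨x₀, h₀⟩ F ℓ
  exact ⟨fun ℓ => (x ℓ).1, fun ℓ => G ℓ (x ℓ), fun ℓ => ⟨(x ℓ).2, hFG ℓ (x ℓ)⟩⟩

theorem exists_sign_HRMPNN_simulating_hrwl_general
    {V R D : Type} [Fintype V] [DecidableEq V]
    {ar : R → ℕ} (har : ∀ r : R, 1 ≤ ar r)
    (H : RelHG V R ar) (hE : H.edges.Nonempty) (c : V → D)
    (n m : ℕ) (hn : Fintype.card V = n)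
    (hm : m = H.edges.sup fun e => ar e.1)
    (L : ℕ) :
    ∃ (h : ℕ → V → Fin (n * m) → ℝ)
      (s : ℕ → ℕ)
      (W : (ℓ : ℕ) → Matrix (Fin (n * m)) (Fin (n * m + s ℓ)) ℝ)
      (t : ℕ → R → ℕ)
      (Wr : (ℓ : ℕ) → (r : R) → Matrix (Fin (t ℓ r)) (Fin (n * m)) ℝ)
      (Y : (ℓ : ℕ) → (r : R) → Matrix (Fin (s ℓ)) (Fin (t ℓ r)) ℝ)
      (p : ℕ → Fin (n * m) → ℝ),
      (∀ ℓ ≤ L, ∀ u v : V, h ℓ u = h ℓ v ↔ H.hrwl c ℓ u = H.hrwl c ℓ v) ∧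
      (∀ ℓ ≤ L, ∀ v : V, ∃ j : Fin n, h ℓ v = fun i => Fts n m i j) ∧
      (∀ ℓ < L, ∀ v : V,
        h (ℓ + 1) v = fun i =>
          sgn ((W ℓ).mulVec
              (Fin.append (h ℓ v)
                (∑ ei ∈ H.incid v,
                  (Y ℓ ei.1.1).mulVec fun k =>
                    sgn ((Wr ℓ ei.1.1).mulVec
                        (fun idx =>
                          ∏ j ∈ Finset.univ.filter (fun j => j ≠ ei.2),
                            (h ℓ (ei.1.2 j) idx + p (j : ℕ) idx)) k - 1))) i - 1)) := by
  have harity : ∀ e ∈ H.edges, ar e.1 ≤ m := fun e he => hm ▸ le_sup (f := fun e => ar e.1) he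
  obtain ⟨e₀, he₀⟩ := hE
  have hm0 : 0 < m := (har e₀.1).trans (harity e₀ he₀)
  have hnm : 0 < n * m := Nat.mul_pos (hn ▸ Fintype.card_pos_iff.2 ⟨e₀.2 ⟨0, har e₀.1⟩⟩) hm0
  obtain ⟨s, t, Wr, Y, hmsg⟩ := H.exists_aggregate_eq_iff n m harity
  obtain ⟨col₀, hcol₀⟩ := exists_fin_eq_iff c hn.le
  obtain ⟨col, W, hcol⟩ := exists_seq_of_forall_exists_succ
    (P := fun ℓ (col : V → Fin n) => ∀ u v, col u = col v ↔ H.hrwl c ℓ u = H.hrwl c ℓ v)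
    (S := fun _ col col' W => ∀ v, (Fts n m)ᵀ (col' v) =
      sgnLayer W (Fin.append ((Fts n m)ᵀ (col v)) (H.aggregate Wr Y col v)))
    hcol₀ fun ℓ col hcol => by
      obtain ⟨W, col', hker, hW⟩ := exists_sgnLayer_eq_Fts m hn.le
        (fun v => Fin.append ((Fts n m)ᵀ (col v)) (H.aggregate Wr Y col v))
        (Fin.castAdd s ⟨0, hnm⟩) fun v => by
          rw [Fin.append_left, transpose_apply, Fts_apply, if_pos (by simp)]
      refine ⟨col', W, fun u v => ?_, hW⟩
      rw [hker, Fin.append_eq_append_iff, (Fts_transpose_injective hm0).eq_iff, hmsg]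
      -- `H.hrwl c (ℓ + 1)` is `H.refine (H.hrwl c ℓ)` by definition
      exact Prod.mk_inj.symm.trans (H.refine_eq_iff_of_ker hcol u v)
  refine ⟨fun ℓ v => (Fts n m)ᵀ (col ℓ v), fun _ => s, W, fun _ => t, fun _ => Wr, fun _ => Y,
    posEnc n m, fun ℓ _ u v => ?_, fun ℓ _ v => ⟨col ℓ v, rfl⟩, fun ℓ _ v => (hcol ℓ).2 v⟩
  rw [(Fts_transpose_injective hm0).eq_iff, (hcol ℓ).1]

/-- Let `G = (V, E, R, c)` be a relational hypergraph with `|V| = n`,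
maximum edge arity `m`, and `L ≥ 0`. Then there exist feature maps
`h⁽ℓ⁾ : V → ℝ^{nm}`, matrices `W⁽ℓ⁾` and, for each relation `r`, matrices `Wᵣ⁽ℓ⁾`,
`Yᵣ⁽ℓ⁾`, and positional encodings `p₁, …, p_m ∈ ℝ^{nm}` such that: (i) `h⁽ℓ⁾ ≡ hrwl₁⁽ℓ⁾`
for all `0 ≤ ℓ ≤ L`; (ii) every `h_v⁽ℓ⁾` is a column of `Fts`; (iii) the update rule
`h_v⁽ℓ⁺¹⁾ = sign(W⁽ℓ⁾ [h_v⁽ℓ⁾ ∥ Σ_{(e,i) ∈ E(v)} Y_{ρ(e)}⁽ℓ⁾ sign(W_{ρ(e)}⁽ℓ⁾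
(⊙_{j ≠ i}(h_{e(j)}⁽ℓ⁾ + p_j)) − 1)] − 1)` holds for all `0 ≤ ℓ < L` and `v ∈ V`. -/
theorem exists_sign_HRMPNN_simulating_hrwl
    {V R D : Type} [Fintype V] [DecidableEq V] [Fintype R] [DecidableEq R]
    {ar : R → ℕ} (har : ∀ r : R, 1 ≤ ar r)
    (H : RelHG V R ar) (hE : H.edges.Nonempty) (c : V → D)
    (n m : ℕ) (hn : Fintype.card V = n)
    (hm : m = H.edges.sup fun e => ar e.1)
    (L : ℕ) :
    ∃ (h : ℕ → V → Fin (n * m) → ℝ)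
      (s : ℕ → ℕ)
      (W : (ℓ : ℕ) → Matrix (Fin (n * m)) (Fin (n * m + s ℓ)) ℝ)
      (t : ℕ → R → ℕ)
      (Wr : (ℓ : ℕ) → (r : R) → Matrix (Fin (t ℓ r)) (Fin (n * m)) ℝ)
      (Y : (ℓ : ℕ) → (r : R) → Matrix (Fin (s ℓ)) (Fin (t ℓ r)) ℝ)
      (p : ℕ → Fin (n * m) → ℝ),
      (∀ ℓ ≤ L, ∀ u v : V, h ℓ u = h ℓ v ↔ H.hrwl c ℓ u = H.hrwl c ℓ v) ∧
      (∀ ℓ ≤ L, ∀ v : V, ∃ j : Fin n, h ℓ v = fun i => Fts n m i j) ∧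
      (∀ ℓ < L, ∀ v : V,
        h (ℓ + 1) v = fun i =>
          sgn ((W ℓ).mulVec
              (Fin.append (h ℓ v)
                (∑ ei ∈ H.incid v,
                  (Y ℓ ei.1.1).mulVec fun k =>
                    sgn ((Wr ℓ ei.1.1).mulVec
                        (fun idx =>
                          ∏ j ∈ Finset.univ.filter (fun j => j ≠ ei.2),
                            (h ℓ (ei.1.2 j) idx + p (j : ℕ) idx)) k - 1))) i - 1)) :=
  exists_sign_HRMPNN_simulating_hrwl_general har H hE c n m hn hm L
end

section
/- Let G = (V, E, R, c) be a relational hypergraph and q = (q, ũ, t) a query such that the coloring c satisfies generalized target node distinguishability with respect to q. Then for every HC-MPNN with L layers whose initialization satisfies INIT(·, q) ≡ c (the map v ↦ INIT(v, q) induces the same partition of V as c), and for every 0 ≤ ℓ ≤ L, we have hrwl_1^(ℓ) ⪯ h_q^(ℓ). -/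
variable {V R D : Type} {ar : R → ℕ}

/-- A query `q = (q, ũ, t)` on a relational hypergraph: a relation type `q`, a
querying position `t`, and an assignment `ũ` of nodes to the remaining positions. -/
structure Query (V R : Type) (ar : R → ℕ) where
  rel : R
  t : Fin (ar rel)
  u : {j : Fin (ar rel) // j ≠ t} → V

/-- A hypergraph conditional MPNN (HC-MPNN): an initialization function together with
arbitrary relation-specific message, aggregation and update functions per layer (the
message function may additionally depend on the query). -/
structure HCMPNN (V R : Type) (ar : R → ℕ) where
  d : ℕ → ℕ
  M : ℕ → Type
  A : ℕ → Type
  init : V → Query V R ar → Fin (d 0) → ℝ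
  msg : (ℓ : ℕ) → R → Set ((Fin (d ℓ) → ℝ) × ℕ) → Query V R ar → M ℓ
  agg : (ℓ : ℕ) → (Fin (d ℓ) → ℝ) → Multiset (M ℓ) → A ℓ
  up : (ℓ : ℕ) → (Fin (d ℓ) → ℝ) → A ℓ → Fin (d (ℓ + 1)) → ℝ

/-- The conditional feature maps `h⁽ℓ⁾_{·|q}` computed by an HC-MPNN on a relational
hypergraph `H` for the query `q`. -/
def HCMPNN.h [DecidableEq V] (net : HCMPNN V R ar) (H : RelHG V R ar)
    (q : Query V R ar) : (ℓ : ℕ) → V → Fin (net.d ℓ) → ℝ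
  | 0 => fun v => net.init v q
  | ℓ + 1 => fun v =>
      net.up ℓ (HCMPNN.h net H q ℓ v)
        (net.agg ℓ (HCMPNN.h net H q ℓ v)
          ((H.incid v).val.map fun ei =>
            net.msg ℓ ei.1.1
              {p : (Fin (net.d ℓ) → ℝ) × ℕ |
                ∃ j : Fin (ar ei.1.1), j ≠ ei.2 ∧
                  p = (HCMPNN.h net H q ℓ (ei.1.2 j), (j : ℕ))}
              q))

/-- A node coloring `c` satisfies generalized target node distinguishability with
respect to the query `q = (q, ũ, t)`: nodes in `ũ` get colors different from all
nodes outside `ũ`, and distinct nodes occurring in `ũ` get distinct colors. -/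
def GTND {D : Type} (c : V → D) (q : Query V R ar) : Prop :=
  (∀ (i : {j : Fin (ar q.rel) // j ≠ q.t}) (v : V),
      v ∉ Set.range q.u → c (q.u i) ≠ c v) ∧
  (∀ i j : {j : Fin (ar q.rel) // j ≠ q.t}, q.u i ≠ q.u j → c (q.u i) ≠ c (q.u j))


open Classical in
lemma multiset_map_eq_map_of_fiber {α β γ : Type*} (f : α → β) (g : α → γ)
    (s t : Multiset α)
    (hfib : ∀ a ∈ s + t, ∀ b ∈ s + t, f a = f b → g a = g b)
    (h : s.map f = t.map f) : s.map g = t.map g := by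
  rcases Multiset.empty_or_exists_mem s with hs | ⟨a0, ha0⟩
  · subst hs
    simp only [Multiset.map_zero] at h ⊢
    obtain rfl := (Multiset.map_eq_zero).mp h.symm
    simp
  · set φ : β → γ := fun b =>
      if hb : ∃ a, a ∈ s + t ∧ f a = b then g hb.choose else g a0 with hφ
    have key : ∀ a ∈ s + t, g a = φ (f a) := by
      intro a ha
      have hb : ∃ a', a' ∈ s + t ∧ f a' = f a := ⟨a, ha, rfl⟩
      simp only [hφ, dif_pos hb]
      exact (hfib _ hb.choose_spec.1 a ha hb.choose_spec.2).symm
    calc s.map g = s.map (φ ∘ f) := Multiset.map_congr rfl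
          (fun a ha => key a (Multiset.mem_add.mpr (Or.inl ha)))
      _ = (s.map f).map φ := by rw [Multiset.map_map]
      _ = (t.map f).map φ := by rw [h]
      _ = t.map (φ ∘ f) := by rw [Multiset.map_map]
      _ = t.map g := (Multiset.map_congr rfl
          (fun a ha => key a (Multiset.mem_add.mpr (Or.inr ha)))).symm

/-- Let `G = (V, E, R, c)` be a relational hypergraph and `q` a query
such that `c` satisfies generalized target node distinguishability w.r.t. `q`. Then
for every HC-MPNN with `L` layers whose initialization satisfies `INIT(·, q) ≡ c`, and
every `0 ≤ ℓ ≤ L`, `hrwl₁⁽ℓ⁾` refines `h_q⁽ℓ⁾`. -/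
theorem hrwl_refines_HCMPNN
    {V R D : Type} [Fintype V] [DecidableEq V] [Fintype R] [DecidableEq R]
    {ar : R → ℕ} (H : RelHG V R ar) (c : V → D)
    (q : Query V R ar) (hgtnd : GTND c q)
    (net : HCMPNN V R ar)
    (hinit : ∀ u v : V, net.init u q = net.init v q ↔ c u = c v)
    (L : ℕ) :
    ∀ ℓ ≤ L, ∀ u v : V,
      H.hrwl c ℓ u = H.hrwl c ℓ v → net.h H q ℓ u = net.h H q ℓ v := by
  intro ℓ hℓ; clear hℓ
  induction ℓ with
  | zero =>
    intro u v h
    exact (hinit u v).mpr h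
  | succ ℓ ih =>
    intro u v h
    have h1 : H.hrwl c ℓ u = H.hrwl c ℓ v := congrArg Prod.fst h
    have h2 : ((H.incid u).val.map fun ei =>
          (({p : WLC D R ℓ × ℕ |
              ∃ j : Fin (ar ei.1.1), j ≠ ei.2 ∧
                p = (RelHG.hrwl H c ℓ (ei.1.2 j), (j : ℕ))},
            ei.1.1) : Set (WLC D R ℓ × ℕ) × R)) =
        ((H.incid v).val.map fun ei =>
          (({p : WLC D R ℓ × ℕ |
              ∃ j : Fin (ar ei.1.1), j ≠ ei.2 ∧
                p = (RelHG.hrwl H c ℓ (ei.1.2 j), (j : ℕ))},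
            ei.1.1) : Set (WLC D R ℓ × ℕ) × R)) := congrArg Prod.snd h
    have hmsg : ((H.incid u).val.map fun ei =>
          net.msg ℓ ei.1.1
            {p : (Fin (net.d ℓ) → ℝ) × ℕ |
              ∃ j : Fin (ar ei.1.1), j ≠ ei.2 ∧
                p = (HCMPNN.h net H q ℓ (ei.1.2 j), (j : ℕ))} q) =
        ((H.incid v).val.map fun ei =>
          net.msg ℓ ei.1.1
            {p : (Fin (net.d ℓ) → ℝ) × ℕ |
              ∃ j : Fin (ar ei.1.1), j ≠ ei.2 ∧
                p = (HCMPNN.h net H q ℓ (ei.1.2 j), (j : ℕ))} q) := by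
      refine multiset_map_eq_map_of_fiber _ _ _ _ ?_ h2
      rintro ⟨⟨r, w⟩, i⟩ - ⟨⟨r', w'⟩, i'⟩ - hf
      have hr : r = r' := congrArg Prod.snd hf
      subst hr
      have hsets : {p : WLC D R ℓ × ℕ |
            ∃ j : Fin (ar r), j ≠ i ∧ p = (RelHG.hrwl H c ℓ (w j), (j : ℕ))} =
          {p : WLC D R ℓ × ℕ |
            ∃ j : Fin (ar r), j ≠ i' ∧ p = (RelHG.hrwl H c ℓ (w' j), (j : ℕ))} :=
        congrArg Prod.fst hf
      have hnet : {p : (Fin (net.d ℓ) → ℝ) × ℕ |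
            ∃ j : Fin (ar r), j ≠ i ∧ p = (HCMPNN.h net H q ℓ (w j), (j : ℕ))} =
          {p : (Fin (net.d ℓ) → ℝ) × ℕ |
            ∃ j : Fin (ar r), j ≠ i' ∧ p = (HCMPNN.h net H q ℓ (w' j), (j : ℕ))} := by
        ext p
        constructor
        · rintro ⟨j, hj, rfl⟩
          have hmem : (RelHG.hrwl H c ℓ (w j), (j : ℕ)) ∈
              {p : WLC D R ℓ × ℕ |
                ∃ j' : Fin (ar r), j' ≠ i ∧
                  p = (RelHG.hrwl H c ℓ (w j'), (j' : ℕ))} := ⟨j, hj, rfl⟩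
          rw [hsets] at hmem
          obtain ⟨j', hj', hpe⟩ := hmem
          have hcol : RelHG.hrwl H c ℓ (w j) = RelHG.hrwl H c ℓ (w' j') :=
            congrArg Prod.fst hpe
          have hjj : (j : ℕ) = (j' : ℕ) := congrArg Prod.snd hpe
          exact ⟨j', hj', by rw [ih _ _ hcol, hjj]⟩
        · rintro ⟨j, hj, rfl⟩
          have hmem : (RelHG.hrwl H c ℓ (w' j), (j : ℕ)) ∈
              {p : WLC D R ℓ × ℕ |
                ∃ j' : Fin (ar r), j' ≠ i ∧
                  p = (RelHG.hrwl H c ℓ (w j'), (j' : ℕ))} := by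
            rw [hsets]; exact ⟨j, hj, rfl⟩
          obtain ⟨j', hj', hpe⟩ := hmem
          have hcol : RelHG.hrwl H c ℓ (w' j) = RelHG.hrwl H c ℓ (w j') :=
            congrArg Prod.fst hpe
          have hjj : (j : ℕ) = (j' : ℕ) := congrArg Prod.snd hpe
          exact ⟨j', hj', by rw [ih _ _ hcol.symm]; exact congrArg _ hjj⟩
      rw [hnet]
    show net.up ℓ (HCMPNN.h net H q ℓ u) _ = net.up ℓ (HCMPNN.h net H q ℓ v) _
    rw [ih _ _ h1, hmsg]
end

section
/- Let G = (V, E, R, c) be a relational hypergraph and q = (q, ũ, t) a query such that the coloring c satisfies generalized target node distinguishability with respect to q. Then for every L ≥ 0 there exists an HC-MPNN with L layers such that for all 0 ≤ ℓ ≤ L, hrwl_1^(ℓ) ≡ h_q^(ℓ) (the WL coloring initialized at c and the conditioned feature map induce the same partition of V at every layer). -/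
variable {V R D : Type} {ar : R → ℕ}

/-! Take the colouring `c` itself, encoded as reals, as initial features, and let every
layer forward messages and multisets unchanged. Only the countably many colours that occur
on `V` need to be encoded, so each layer's update can decode its input back into the WL
colours of the previous round and re-encode the next WL colour. By induction the layer-`ℓ`
feature of `v` is then an injective image of `hrwl⁽ℓ⁾ v`. -/

lemma exists_real_encode_decode {ι α : Type*} [Countable ι] [Nonempty ι] (g : ι → α) :
    ∃ (enc : α → ℝ) (dec : ℝ → α), ∀ i, dec (enc (g i)) = g i := by
  have : Nonempty α := ‹Nonempty ι›.map g
  obtain ⟨f, hf⟩ := Set.countable_iff_exists_injOn.mp (Set.countable_range g)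
  have hinj : Set.InjOn (fun a => (f a : ℝ)) (Set.range g) :=
    fun a ha b hb hab => hf ha hb (Nat.cast_injective hab)
  exact ⟨fun a => (f a : ℝ), Function.invFunOn _ (Set.range g),
    fun i => hinj.leftInvOn_invFunOn ⟨i, rfl⟩⟩

namespace HCMPNN

variable {V R D : Type} {ar : R → ℕ}

def ofWLCode (c : V → D) (enc : (ℓ : ℕ) → WLC D R ℓ → ℝ) (dec : (ℓ : ℕ) → ℝ → WLC D R ℓ) :
    HCMPNN V R ar where
  d _ := 1
  M _ := Set ((Fin 1 → ℝ) × ℕ) × R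
  A _ := Multiset (Set ((Fin 1 → ℝ) × ℕ) × R)
  init v _ _ := enc 0 (c v)
  msg _ r S _ := (S, r)
  agg _ _ m := m
  up ℓ x a _ := enc (ℓ + 1)
    ((dec ℓ (x 0), a.map fun m => ((fun p => (dec ℓ (p.1 0), p.2)) '' m.1, m.2)) :
      WLC D R ℓ × Multiset (Set (WLC D R ℓ × ℕ) × R))

variable [DecidableEq V] (H : RelHG V R ar) (c : V → D) (q : Query V R ar)
  {enc : (ℓ : ℕ) → WLC D R ℓ → ℝ} {dec : (ℓ : ℕ) → ℝ → WLC D R ℓ}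

lemma ofWLCode_h (hdec : ∀ ℓ v, dec ℓ (enc ℓ (H.hrwl c ℓ v)) = H.hrwl c ℓ v) (ℓ : ℕ) (v : V) :
    (ofWLCode c enc dec).h H q ℓ v = fun _ => enc ℓ (H.hrwl c ℓ v) := by
  induction ℓ generalizing v with
  | zero => rfl
  | succ ℓ ih =>
    simp only [HCMPNN.h, ih]
    funext
    simp only [ofWLCode, hdec, Multiset.map_map]
    congr 3
    funext ei
    refine Prod.ext (Set.ext fun p => ⟨?_, ?_⟩) rfl
    · rintro ⟨_, ⟨j, hj, rfl⟩, rfl⟩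
      exact ⟨j, hj, congrArg (·, (j : ℕ)) (hdec ℓ _)⟩
    · rintro ⟨j, hj, rfl⟩
      exact ⟨_, ⟨j, hj, rfl⟩, congrArg (·, (j : ℕ)) (hdec ℓ _)⟩

end HCMPNN

theorem exists_HCMPNN_matching_hrwl_general
    {V R D : Type} [Fintype V] [DecidableEq V]
    {ar : R → ℕ} (H : RelHG V R ar) (c : V → D)
    (q : Query V R ar)
    (L : ℕ) :
    ∃ net : HCMPNN V R ar,
      ∀ ℓ ≤ L, ∀ u v : V,
        H.hrwl c ℓ u = H.hrwl c ℓ v ↔ net.h H q ℓ u = net.h H q ℓ v := by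
  rcases isEmpty_or_nonempty V with hV | hV
  · exact ⟨⟨fun _ => 0, fun _ => Unit, fun _ => Unit, fun _ _ _ => 0, fun _ _ _ _ => (),
      fun _ _ _ => (), fun _ _ _ _ => 0⟩, fun _ _ u => isEmptyElim u⟩
  choose enc dec hdec using fun ℓ => exists_real_encode_decode (H.hrwl c ℓ)
  refine ⟨HCMPNN.ofWLCode c enc dec, fun ℓ _ u v => ?_⟩
  rw [HCMPNN.ofWLCode_h H c q hdec, HCMPNN.ofWLCode_h H c q hdec]
  refine ⟨fun h => by rw [h], fun h => ?_⟩
  rw [← hdec ℓ u, congrFun h (0 : Fin 1), hdec]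

/-- Let `G = (V, E, R, c)` be a relational hypergraph and `q` a query
such that `c` satisfies generalized target node distinguishability w.r.t. `q`. Then
for every `L ≥ 0` there exists an HC-MPNN with `L` layers such that for all
`0 ≤ ℓ ≤ L`, `hrwl₁⁽ℓ⁾ ≡ h_q⁽ℓ⁾` (same partition of `V` at every layer). -/
theorem exists_HCMPNN_matching_hrwl
    {V R D : Type} [Fintype V] [DecidableEq V] [Fintype R] [DecidableEq R]
    {ar : R → ℕ} (H : RelHG V R ar) (c : V → D)
    (q : Query V R ar) (hgtnd : GTND c q)
    (L : ℕ) :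
    ∃ net : HCMPNN V R ar,
      ∀ ℓ ≤ L, ∀ u v : V,
        H.hrwl c ℓ u = H.hrwl c ℓ v ↔ net.h H q ℓ u = net.h H q ℓ v :=
  exists_HCMPNN_matching_hrwl_general H c q L
end

section
/- HR-MPNNs subsume R-MPNNs on knowledge graphs: let G = (V, E, R, x) be a knowledge graph. For every R-MPNN A with L layers (given by functions UP_A^(ℓ), AGG_A^(ℓ), MSG_{A,r}) there exists an HR-MPNN B with L layers (given by functions UP_B^(ℓ), AGG_B^(ℓ), MSG_{B,r}) such that for all v ∈ V and all 0 ≤ ℓ ≤ L, h_{A,G}^(ℓ)(v) = h_{B,G}^(ℓ)(v). -/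
variable {V R D : Type} {ar : R → ℕ}

/-- A knowledge graph is a relational hypergraph in which every relation has arity
exactly `2`.  `kgFact r u v` is the binary fact `r(u, v)`. -/
def kgFact {V R : Type} (r : R) (u v : V) :
    (Σ r' : R, Fin ((fun _ : R => 2) r') → V) :=
  ⟨r, ![u, v]⟩

/-- A relational MPNN (R-MPNN) on knowledge graphs: arbitrary relation-specific
message, aggregation and update functions per layer. -/
structure RMPNN (R : Type) where
  d : ℕ → ℕ
  M : ℕ → Type
  A : ℕ → Type
  msg : (ℓ : ℕ) → R → (Fin (d ℓ) → ℝ) → M ℓ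
  agg : (ℓ : ℕ) → Multiset (M ℓ) → A ℓ
  up : (ℓ : ℕ) → (Fin (d ℓ) → ℝ) → A ℓ → Fin (d (ℓ + 1)) → ℝ

/-- The feature maps computed by an R-MPNN on a knowledge graph `H`:
`h_v⁽ℓ⁺¹⁾ = UP⁽ℓ⁾(h_v⁽ℓ⁾, AGG⁽ℓ⁾({{MSG_r⁽ℓ⁾(h_w⁽ℓ⁾) | w ∈ N_r(v), r ∈ R}}))` where
`N_r(v) = {w | r(w, v) ∈ E}`. -/
def RMPNN.h {V R : Type} [Fintype V] [DecidableEq V] [Fintype R] [DecidableEq R]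
    (net : RMPNN R) (H : RelHG V R (fun _ => 2)) (x : V → Fin (net.d 0) → ℝ) :
    (ℓ : ℕ) → V → Fin (net.d ℓ) → ℝ
  | 0 => x
  | ℓ + 1 => fun v =>
      net.up ℓ (RMPNN.h net H x ℓ v)
        (net.agg ℓ
          (((Finset.univ : Finset (R × V)).filter
              fun rw => kgFact rw.1 rw.2 v ∈ H.edges).val.map
            fun rw => net.msg ℓ rw.1 (RMPNN.h net H x ℓ rw.2)))

open Classical in
/-- The simulating message function: extract the feature of the node at position `0`
(if any) and apply the R-MPNN message function. -/
noncomputable def Bmsg {R : Type} (netA : RMPNN R) (ℓ : ℕ) (r : R)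
    (S : Set ((Fin (netA.d ℓ) → ℝ) × ℕ)) : Option (netA.M ℓ) :=
  if h : ∃ y, (y, (0 : ℕ)) ∈ S then some (netA.msg ℓ r h.choose) else none

/-- The simulating HR-MPNN. -/
@[reducible] noncomputable def Bnet {R : Type} (netA : RMPNN R) : HRMPNN R where
  d := netA.d
  M := fun ℓ => Option (netA.M ℓ)
  A := netA.A
  msg := Bmsg netA
  agg := fun ℓ _ ms => netA.agg ℓ (ms.filterMap id)
  up := netA.up

lemma filterMap_eq_map_filter' {α β : Type*} (F : α → Option β) (p : α → Prop)
    [DecidablePred p] (f : α → β)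
    (hF : ∀ a, F a = if p a then some (f a) else none) (s : Multiset α) :
    s.filterMap F = (s.filter p).map f := by
  induction s using Multiset.induction with
  | empty => simp
  | cons a s ih =>
    by_cases h : p a
    · rw [Multiset.filterMap_cons_some _ _ _ (by rw [hF a, if_pos h]),
        Multiset.filter_cons_of_pos _ h, Multiset.map_cons, ih]
    · rw [Multiset.filterMap_cons_none _ _ (by rw [hF a, if_neg h]),
        Multiset.filter_cons_of_neg _ h, ih]

lemma Bnet_key {V R : Type} [Fintype V] [DecidableEq V] [Fintype R] [DecidableEq R]
    (H : RelHG V R (fun _ => 2)) (netA : RMPNN R)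
    (x : V → Fin (netA.d 0) → ℝ) :
    ∀ ℓ (v : V), netA.h H x ℓ v = HRMPNN.h (Bnet netA) H x ℓ v := by
  intro ℓ
  induction ℓ with
  | zero => intro v; rfl
  | succ ℓ ih =>
    intro v
    have hg : HRMPNN.h (Bnet netA) H x ℓ = netA.h H x ℓ :=
      funext fun w => (ih w).symm
    show _ = HRMPNN.h (Bnet netA) H x (ℓ + 1) v
    rw [HRMPNN.h, RMPNN.h, hg]
    set g : V → Fin (netA.d ℓ) → ℝ := netA.h H x ℓ with hgdef
    -- it suffices to show the aggregated multisets agree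
    show netA.up ℓ (g v) (netA.agg ℓ _) = netA.up ℓ (g v) (netA.agg ℓ _)
    -- the message function of `Bnet` computes, on each incidence pair:
    have hF : ∀ a : Σ e : Σ r : R, Fin 2 → V, Fin 2,
        (Bnet netA).msg ℓ a.1.1
            {p : (Fin (netA.d ℓ) → ℝ) × ℕ |
              ∃ j : Fin 2, j ≠ a.2 ∧ p = (g (a.1.2 j), (j : ℕ))}
          = if (a.2 : ℕ) = 1 then some (netA.msg ℓ a.1.1 (g (a.1.2 0))) else none := by
      rintro ⟨⟨r, f⟩, i⟩
      show Bmsg netA ℓ r _ = _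
      unfold Bmsg
      by_cases hi : i = 1
      case neg =>
        have hi0 : i = 0 := by
          refine Fin.ext ?_
          have h1 : (i : ℕ) ≠ 1 := fun h => hi (Fin.ext h)
          have h2 := i.isLt
          omega
        subst hi0
        rw [if_neg (by norm_num)]
        rw [dif_neg]
        rintro ⟨y, j, hj, hp⟩
        have h2 : (0 : ℕ) = (j : ℕ) := congrArg Prod.snd hp
        have : j = 0 := Fin.ext h2.symm
        exact hj this
      case pos =>
        subst hi
        dsimp only
        rw [if_pos (by norm_num)]
        have hex : ∃ y, (y, (0 : ℕ)) ∈
            {p : (Fin (netA.d ℓ) → ℝ) × ℕ |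
              ∃ j : Fin 2, j ≠ (1 : Fin 2) ∧ p = (g (f j), (j : ℕ))} :=
          ⟨g (f 0), 0, by norm_num, rfl⟩
        rw [dif_pos hex]
        obtain ⟨j, hj, hp⟩ := hex.choose_spec
        have h2 : (0 : ℕ) = (j : ℕ) := congrArg Prod.snd hp
        have hj0 : j = 0 := Fin.ext h2.symm
        subst hj0
        have h1 : hex.choose = g (f 0) := congrArg Prod.fst hp
        rw [h1]
    -- rewrite the HR-MPNN side as a filterMap, then as a map over a filter
    rw [Multiset.filterMap_map, Function.id_comp]
    have := filterMap_eq_map_filter'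
      (fun a : Σ e : Σ r : R, Fin 2 → V, Fin 2 =>
        (Bnet netA).msg ℓ a.1.1
          {p : (Fin (netA.d ℓ) → ℝ) × ℕ |
            ∃ j : Fin 2, j ≠ a.2 ∧ p = (g (a.1.2 j), (j : ℕ))})
      (fun a => (a.2 : ℕ) = 1)
      (fun a => netA.msg ℓ a.1.1 (g (a.1.2 0))) hF ((H.incid v).val)
    rw [this]
    -- now identify the two index multisets via the bijection (r, w) ↦ (r(w,v), 1)
    have hsets :
        ((H.incid v).val.filter (fun a => (a.2 : ℕ) = 1))
          = ((Finset.univ : Finset (R × V)).filter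
              fun rw => kgFact rw.1 rw.2 v ∈ H.edges).val.map
            (fun rw => (⟨kgFact rw.1 rw.2 v, (1 : Fin 2)⟩ :
              Σ e : Σ r : R, Fin 2 → V, Fin 2)) := by
      have hnd1 : ((H.incid v).val.filter (fun a => (a.2 : ℕ) = 1)).Nodup :=
        (H.incid v).nodup.filter _
      have hnd2 : (((Finset.univ : Finset (R × V)).filter
          fun rw => kgFact rw.1 rw.2 v ∈ H.edges).val.map
            (fun rw => (⟨kgFact rw.1 rw.2 v, (1 : Fin 2)⟩ :
              Σ e : Σ r : R, Fin 2 → V, Fin 2))).Nodup := by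
        refine (Finset.filter _ _).nodup.map ?_
        rintro ⟨r, w⟩ ⟨r', w'⟩ h
        have h1 : kgFact r w v = kgFact r' w' v := congrArg Sigma.fst h
        have hr : r = r' := congrArg Sigma.fst h1
        subst hr
        have hf : (![w, v] : Fin 2 → V) = ![w', v] := by
          have := (Sigma.mk.inj_iff.mp h1).2
          exact eq_of_heq this
        have : w = w' := by
          have := congrFun hf 0
          simpa using this
        simp [this]
      refine (Multiset.Nodup.ext hnd1 hnd2).mpr ?_
      rintro ⟨⟨r, f⟩, i⟩
      constructor
      · intro hmem
        rw [Multiset.mem_filter] at hmem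
        obtain ⟨hin, hi1⟩ := hmem
        have hi : i = 1 := Fin.ext hi1
        subst hi
        have hin' : (⟨⟨r, f⟩, 1⟩ : Σ e : Σ r : R, Fin 2 → V, Fin 2) ∈ H.incid v := hin
        rw [RelHG.incid, Finset.mem_filter, Finset.mem_sigma] at hin'
        obtain ⟨⟨he, -⟩, hv⟩ := hin'
        have hfv : f 1 = v := hv
        have hfe : f = ![f 0, v] := by
          funext j
          fin_cases j <;> simp [hfv]
        rw [Multiset.mem_map]
        refine ⟨(r, f 0), ?_, ?_⟩
        · rw [Finset.mem_val, Finset.mem_filter]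
          refine ⟨Finset.mem_univ _, ?_⟩
          show (⟨r, ![f 0, v]⟩ : Σ r' : R, Fin 2 → V) ∈ H.edges
          rw [← hfe]; exact he
        · show (⟨kgFact r (f 0) v, (1 : Fin 2)⟩ :
              Σ e : Σ r : R, Fin 2 → V, Fin 2) = ⟨⟨r, f⟩, 1⟩
          unfold kgFact
          rw [← hfe]
      · intro hmem
        rw [Multiset.mem_map] at hmem
        obtain ⟨⟨r', w⟩, hrw, heq⟩ := hmem
        rw [Finset.mem_val, Finset.mem_filter] at hrw
        obtain ⟨-, hedge⟩ := hrw
        rw [Multiset.mem_filter]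
        constructor
        · rw [← heq]
          show (⟨kgFact r' w v, (1 : Fin 2)⟩ :
              Σ e : Σ r : R, Fin 2 → V, Fin 2) ∈ H.incid v
          rw [RelHG.incid, Finset.mem_filter, Finset.mem_sigma]
          exact ⟨⟨hedge, Finset.mem_univ _⟩, by simp [kgFact]⟩
        · rw [← heq]
          rfl
    rw [hsets, Multiset.map_map]
    refine congrArg (netA.up ℓ (g v)) (congrArg (netA.agg ℓ) ?_)
    refine Multiset.map_congr rfl ?_
    rintro ⟨r, w⟩ -
    simp [kgFact]

/-- HR-MPNNs subsume R-MPNNs on knowledge graphs: for every R-MPNN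
`A` with `L` layers there exists an HR-MPNN `B` with `L` layers (with the same layer
dimensions) computing exactly the same node features on `G` at every layer
`0 ≤ ℓ ≤ L`. -/
theorem HRMPNN_subsumes_RMPNN
    {V R : Type} [Fintype V] [DecidableEq V] [Fintype R] [DecidableEq R]
    (H : RelHG V R (fun _ => 2)) (netA : RMPNN R)
    (x : V → Fin (netA.d 0) → ℝ) (L : ℕ) :
    ∃ (M A : ℕ → Type)
      (msg : (ℓ : ℕ) → R → Set ((Fin (netA.d ℓ) → ℝ) × ℕ) → M ℓ)
      (agg : (ℓ : ℕ) → (Fin (netA.d ℓ) → ℝ) → Multiset (M ℓ) → A ℓ)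
      (up : (ℓ : ℕ) → (Fin (netA.d ℓ) → ℝ) → A ℓ → Fin (netA.d (ℓ + 1)) → ℝ),
      ∀ ℓ ≤ L, ∀ v : V,
        netA.h H x ℓ v = HRMPNN.h (HRMPNN.mk netA.d M A msg agg up) H x ℓ v := by
  exact ⟨(Bnet netA).M, (Bnet netA).A, (Bnet netA).msg, (Bnet netA).agg, (Bnet netA).up,
    fun ℓ _ v => Bnet_key H netA x ℓ v⟩
end

section
/- Let G = (V, E, R, x, η) be a knowledge graph with feature map x and a pairwise node coloring η : V × V → D satisfying target node distinguishability, and fix a tail query q = (q, (u), 2) for q ∈ R. For every L ≥ 0 there exists an HC-MPNN restricted to tail predictions with L layers such that for all 0 ≤ ℓ ≤ L, hcwl_2^(ℓ) ≡ h_q^(ℓ) (the test coloring and the pairwise feature map (u, v) ↦ h_{v|(q,(u),2)}^(ℓ) induce the same partition of V × V at every layer). -/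
variable {V R D : Type} {ar : R → ℕ}

/-- The tail query `(q, (u), 2)` on a knowledge graph: predict the tail of `q(u, ?)`. -/
def tailQuery {V R : Type} (q : R) (u : V) : Query V R (fun _ => 2) :=
  ⟨q, ⟨1, Nat.one_lt_two⟩, fun _ => u⟩

/-- The test `hcwl₂` on a knowledge graph `H` (with the canonical injective `τ`),
computing pairwise colorings from the initial pairwise coloring `η`. -/
def hcwl2 {V R D : Type} [DecidableEq V] (H : RelHG V R (fun _ => 2))
    (η : V → V → D) : (ℓ : ℕ) → V → V → WLC D R ℓ
  | 0 => η
  | ℓ + 1 => fun u v =>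
      ⟨hcwl2 H η ℓ u v,
        (H.incid v).val.map fun ei =>
          ({p : WLC D R ℓ × ℕ |
              ∃ j : Fin 2, j ≠ ei.2 ∧
                p = (hcwl2 H η ℓ u (ei.1.2 j), (j : ℕ))},
            ei.1.1)⟩

/-- For any function on a finite type there is a real-valued encoding inducing the
same partition. -/
lemma exists_enc {A B : Type} [Finite A] (g : A → B) :
    ∃ e : A → ℝ, ∀ a a' : A, e a = e a' ↔ g a = g a' := by
  classical
  let s : Setoid A := ⟨fun a a' => g a = g a', ⟨fun _ => rfl, Eq.symm, Eq.trans⟩⟩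
  have : Finite (Quotient s) := Quotient.finite s
  obtain ⟨f, hf⟩ := Countable.exists_injective_nat (Quotient s)
  refine ⟨fun a => (f ⟦a⟧ : ℝ), fun a a' => ?_⟩
  show ((f ⟦a⟧ : ℕ) : ℝ) = ((f ⟦a'⟧ : ℕ) : ℝ) ↔ g a = g a'
  rw [Nat.cast_inj]
  constructor
  · intro h
    exact Quotient.exact (hf h)
  · intro h
    exact congrArg f (Quotient.sound h)

lemma tailQuery_inj {V R : Type} (q : R) {u u' : V}
    (h : tailQuery q u = tailQuery q u') : u = u' := by
  simp only [tailQuery, Query.mk.injEq, heq_eq_eq, true_and] at h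
  exact congrFun h ⟨⟨0, by norm_num⟩, by decide⟩

/-- The multiset of encoded messages received by `v` for source `u`. -/
noncomputable def encMult {V R : Type} [DecidableEq V] (H : RelHG V R (fun _ => 2))
    (e : V → V → Fin 1 → ℝ) (u v : V) :
    Multiset (Set ((Fin 1 → ℝ) × ℕ) × R) :=
  (H.incid v).val.map fun ei =>
    ({p : (Fin 1 → ℝ) × ℕ | ∃ j : Fin 2, j ≠ ei.2 ∧ p = (e u (ei.1.2 j), (j : ℕ))},
      ei.1.1)

section
open Classical

/-- The HC-MPNN built from a family of layerwise pairwise encodings `e`. -/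
noncomputable def mkNet {V R : Type} [DecidableEq V] (H : RelHG V R (fun _ => 2))
    (q : R) (e : ℕ → V → V → Fin 1 → ℝ) : HCMPNN V R (fun _ => 2) where
  d := fun _ => 1
  M := fun _ => Set ((Fin 1 → ℝ) × ℕ) × R
  A := fun _ => (Fin 1 → ℝ) × Multiset (Set ((Fin 1 → ℝ) × ℕ) × R)
  init := fun v qu =>
    if h : ∃ u : V, qu = tailQuery q u then e 0 h.choose v else fun _ => 0
  msg := fun _ r S _ => (S, r)
  agg := fun _ hv m => (hv, m)
  up := fun ℓ _ a =>
    if h : ∃ uv : V × V, a = (e ℓ uv.1 uv.2, encMult H (e ℓ) uv.1 uv.2)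
    then e (ℓ + 1) h.choose.1 h.choose.2 else fun _ => 0

lemma mkNet_up_def {V R : Type} [DecidableEq V] (H : RelHG V R (fun _ => 2)) (q : R)
    (e : ℕ → V → V → Fin 1 → ℝ) (ℓ : ℕ) (hv : Fin 1 → ℝ)
    (a : (Fin 1 → ℝ) × Multiset (Set ((Fin 1 → ℝ) × ℕ) × R)) :
    (mkNet H q e).up ℓ hv a =
      if h : ∃ uv : V × V, a = (e ℓ uv.1 uv.2, encMult H (e ℓ) uv.1 uv.2)
      then e (ℓ + 1) h.choose.1 h.choose.2 else fun _ => 0 := rfl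

end

/-- Let `G = (V, E, R, x, η)` be a knowledge graph with feature map
`x` and pairwise coloring `η` satisfying target node distinguishability, and fix a
tail query `(q, (u), 2)` with `q ∈ R`.  For every `L ≥ 0` there is an HC-MPNN
restricted to tail predictions with `L` layers such that for all `0 ≤ ℓ ≤ L`,
`hcwl₂⁽ℓ⁾ ≡ h_q⁽ℓ⁾`: the test coloring and the pairwise feature map
`(u, v) ↦ h⁽ℓ⁾_{v|(q,(u),2)}` induce the same partition of `V × V` at every layer. -/
theorem exists_HCMPNN_matching_hcwl2
    {V R D : Type} [Fintype V] [DecidableEq V] [Fintype R] [DecidableEq R]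
    (H : RelHG V R (fun _ => 2)) {d0 : ℕ} (x : V → Fin d0 → ℝ)
    (η : V → V → D) (hη : ∀ u v : V, u ≠ v → η u u ≠ η u v)
    (q : R) (L : ℕ) :
    ∃ net : HCMPNN V R (fun _ => 2),
      ∀ ℓ ≤ L, ∀ u v u' v' : V,
        hcwl2 H η ℓ u v = hcwl2 H η ℓ u' v' ↔
        net.h H (tailQuery q u) ℓ v = net.h H (tailQuery q u') ℓ v' := by
  classical
  have hE : ∀ ℓ : ℕ, ∃ e : V × V → ℝ, ∀ p p' : V × V,
      e p = e p' ↔ hcwl2 H η ℓ p.1 p.2 = hcwl2 H η ℓ p'.1 p'.2 :=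
    fun ℓ => exists_enc (fun p : V × V => hcwl2 H η ℓ p.1 p.2)
  choose enc henc using hE
  set E : ℕ → V → V → Fin 1 → ℝ := fun ℓ u v _ => enc ℓ (u, v) with hEdef
  have hEiff : ∀ ℓ (u v u' v' : V),
      E ℓ u v = E ℓ u' v' ↔ hcwl2 H η ℓ u v = hcwl2 H η ℓ u' v' := by
    intro ℓ u v u' v'
    constructor
    · intro h
      exact (henc ℓ (u, v) (u', v')).1 (congrFun h ⟨0, Nat.one_pos⟩)
    · intro h
      exact funext fun _ => (henc ℓ (u, v) (u', v')).2 h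
  refine ⟨mkNet H q E, ?_⟩
  have key : ∀ ℓ (u v : V),
      (mkNet H q E).h H (tailQuery q u) ℓ v = E ℓ u v := by
    intro ℓ
    induction ℓ with
    | zero =>
      intro u v
      show (mkNet H q E).init v (tailQuery q u) = E 0 u v
      have hex : ∃ u' : V, tailQuery q u = tailQuery q u' := ⟨u, rfl⟩
      simp only [mkNet]
      rw [dif_pos hex]
      have : u = hex.choose := tailQuery_inj q hex.choose_spec
      rw [← this]
    | succ ℓ IH =>
      intro u v
      simp only [HCMPNN.h, IH]
      show ((mkNet H q E).up ℓ (E ℓ u v) ((E ℓ u v, encMult H (E ℓ) u v)))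
        = E (ℓ + 1) u v
      rw [mkNet_up_def]
      have hex : ∃ uv : V × V,
          ((E ℓ u v, encMult H (E ℓ) u v) :
            (Fin 1 → ℝ) × Multiset (Set ((Fin 1 → ℝ) × ℕ) × R))
            = (E ℓ uv.1 uv.2, encMult H (E ℓ) uv.1 uv.2) := ⟨(u, v), rfl⟩
      rw [dif_pos hex]
      have h1 : E ℓ u v = E ℓ hex.choose.1 hex.choose.2 :=
        congrArg Prod.fst hex.choose_spec
      have h2 : encMult H (E ℓ) u v = encMult H (E ℓ) hex.choose.1 hex.choose.2 :=
        congrArg Prod.snd hex.choose_spec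
      -- decode function
      set dec : (Fin 1 → ℝ) → WLC D R ℓ := fun f =>
        if h : ∃ uv : V × V, E ℓ uv.1 uv.2 = f
        then hcwl2 H η ℓ h.choose.1 h.choose.2 else hcwl2 H η ℓ u v with hdec
      have hdecE : ∀ u' v' : V, dec (E ℓ u' v') = hcwl2 H η ℓ u' v' := by
        intro u' v'
        have hx : ∃ uv : V × V, E ℓ uv.1 uv.2 = E ℓ u' v' := ⟨(u', v'), rfl⟩
        rw [hdec]
        simp only [dif_pos hx]
        exact (hEiff ℓ _ _ _ _).1 hx.choose_spec
      set G : Set ((Fin 1 → ℝ) × ℕ) × R → Set (WLC D R ℓ × ℕ) × R :=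
        fun Sr => ({p : WLC D R ℓ × ℕ |
          ∃ f : Fin 1 → ℝ, (f, p.2) ∈ Sr.1 ∧ p.1 = dec f}, Sr.2) with hG
      have hGmap : ∀ u' v' : V,
          (encMult H (E ℓ) u' v').map G
            = (H.incid v').val.map fun ei =>
                ({p : WLC D R ℓ × ℕ |
                    ∃ j : Fin 2, j ≠ ei.2 ∧
                      p = (hcwl2 H η ℓ u' (ei.1.2 j), (j : ℕ))},
                  ei.1.1) := by
        intro u' v'
        rw [encMult, Multiset.map_map]
        refine Multiset.map_congr rfl fun ei _ => ?_
        simp only [Function.comp, hG]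
        refine Prod.ext ?_ rfl
        ext ⟨w, n⟩
        simp only [Set.mem_setOf_eq]
        constructor
        · rintro ⟨f, ⟨j, hj, hfj⟩, hw⟩
          refine ⟨j, hj, ?_⟩
          obtain ⟨hf, hn⟩ := Prod.mk.injEq .. ▸ hfj
          refine Prod.ext ?_ hn
          rw [hw, hf, hdecE]
        · rintro ⟨j, hj, hp⟩
          obtain ⟨hw, hn⟩ := Prod.mk.injEq .. ▸ hp
          exact ⟨E ℓ u' (ei.1.2 j), ⟨j, hj, by rw [hn]⟩, by rw [hw, hdecE]⟩
      -- the chosen pair has the same (ℓ+1)-color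
      refine (hEiff (ℓ + 1) _ _ _ _).2 ?_
      show hcwl2 H η (ℓ + 1) hex.choose.1 hex.choose.2 = hcwl2 H η (ℓ + 1) u v
      show (⟨hcwl2 H η ℓ hex.choose.1 hex.choose.2, _⟩ :
          WLC D R ℓ × Multiset (Set (WLC D R ℓ × ℕ) × R))
        = ⟨hcwl2 H η ℓ u v, _⟩
      have hc1 : hcwl2 H η ℓ hex.choose.1 hex.choose.2 = hcwl2 H η ℓ u v :=
        (hEiff ℓ _ _ _ _).1 h1.symm
      have hc2 : (encMult H (E ℓ) hex.choose.1 hex.choose.2).map G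
          = (encMult H (E ℓ) u v).map G := by rw [← h2]
      rw [hGmap, hGmap] at hc2
      exact Prod.ext hc1 hc2
  intro ℓ _ u v u' v'
  rw [key ℓ u v, key ℓ u' v']
  exact (hEiff ℓ u v u' v').symm
end

section
/- Let G = (V, E, R, x, η) be a knowledge graph with feature map x and pairwise coloring η, and fix q ∈ R. For every initial feature map y for the auxiliary knowledge graph G² satisfying generalized target node distinguishability (y((u, u)) ≠ y((u, v)) for all u ≠ v) and every HR-MPNN B with L layers, there exists an HC-MPNN A with L layers (processing tail queries (q, (u), 2)) such that for all 0 ≤ ℓ ≤ L and all u, v ∈ V, h_{A,G}^(ℓ)(u, v) = h_{B,G²}^(ℓ)((u, v)), where h_{A,G}^(ℓ)(u, v) := h_{v|(q,(u),2)}^(ℓ) computed by A on G. -/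
variable {V R D : Type} {ar : R → ℕ}

/-- The auxiliary knowledge graph `G²` of a knowledge graph `G`: its nodes are the
pairs `V × V`, and it has the fact `r((u, w), (u, v))` for every fact `r(w, v)` of `G`
and every `u ∈ V`. -/
def auxKG {V R : Type} [Fintype V] [DecidableEq V] [DecidableEq R]
    (H : RelHG V R (fun _ => 2)) : RelHG (V × V) R (fun _ => 2) where
  edges :=
    (H.edges ×ˢ (Finset.univ : Finset V)).image fun p =>
      kgFact p.1.1 (p.2, p.1.2 ⟨0, Nat.zero_lt_two⟩) (p.2, p.1.2 ⟨1, Nat.one_lt_two⟩)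


/-- Lift an edge–position pair of `G` to one of `G²` by pairing every node with `u`. -/
def pairMap {V R : Type} (u : V) :
    (Σ e : Σ r : R, Fin ((fun _ : R => 2) r) → V, Fin ((fun _ : R => 2) e.1)) →
    (Σ e : Σ r : R, Fin ((fun _ : R => 2) r) → V × V, Fin ((fun _ : R => 2) e.1)) :=
  fun ei => ⟨⟨ei.1.1, fun j => (u, ei.1.2 j)⟩, ei.2⟩

lemma pairMap_injective {V R : Type} (u : V) :
    Function.Injective (pairMap (V := V) (R := R) u) :=
  Function.LeftInverse.injective
    (g := fun ei => ⟨⟨ei.1.1, fun j => (ei.1.2 j).2⟩, ei.2⟩) fun _ => rfl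

lemma kgFact_eta {V R : Type} (r : R) (a : V) (f : Fin 2 → V) :
    kgFact r (a, f ⟨0, Nat.zero_lt_two⟩) (a, f ⟨1, Nat.one_lt_two⟩)
      = ⟨r, fun j => (a, f j)⟩ := by
  unfold kgFact
  congr 1
  funext j
  fin_cases j <;> rfl

lemma incid_auxKG {V R : Type} [Fintype V] [DecidableEq V] [DecidableEq R]
    (H : RelHG V R (fun _ => 2)) (u v : V) :
    (auxKG H).incid (u, v) = (H.incid v).image (pairMap u) := by
  ext p
  simp only [RelHG.incid, auxKG, Finset.mem_filter, Finset.mem_sigma,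
    Finset.mem_image, Finset.mem_univ, and_true, Finset.mem_product]
  constructor
  · rintro ⟨⟨⟨e, a⟩, he, hfact⟩, hpos⟩
    rw [kgFact_eta] at hfact
    obtain ⟨P, i⟩ := p
    subst hfact
    obtain ⟨ha, hv⟩ := Prod.mk.injEq .. ▸ hpos
    subst ha
    exact ⟨⟨e, i⟩, ⟨he, hv⟩, rfl⟩
  · rintro ⟨⟨e, i⟩, ⟨he, hv⟩, hp⟩
    subst hp
    exact ⟨⟨⟨e, u⟩, he, kgFact_eta ..⟩,
      congrArg (Prod.mk u) hv⟩

theorem HRMPNN_on_auxKG_to_HCMPNN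
    {V R D : Type} [Fintype V] [DecidableEq V] [Fintype R] [DecidableEq R]
    (H : RelHG V R (fun _ => 2)) {d0 : ℕ} (x : V → Fin d0 → ℝ)
    (η : V → V → D) (q : R)
    (netB : HRMPNN R) (y : V × V → Fin (netB.d 0) → ℝ)
    (hy : ∀ u v : V, u ≠ v → y (u, u) ≠ y (u, v))
    (L : ℕ) :
    ∃ (M A : ℕ → Type)
      (init : V → Query V R (fun _ => 2) → Fin (netB.d 0) → ℝ)
      (msg : (ℓ : ℕ) → R → Set ((Fin (netB.d ℓ) → ℝ) × ℕ) →
        Query V R (fun _ => 2) → M ℓ)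
      (agg : (ℓ : ℕ) → (Fin (netB.d ℓ) → ℝ) → Multiset (M ℓ) → A ℓ)
      (up : (ℓ : ℕ) → (Fin (netB.d ℓ) → ℝ) → A ℓ → Fin (netB.d (ℓ + 1)) → ℝ),
      ∀ ℓ ≤ L, ∀ u v : V,
        HCMPNN.h (HCMPNN.mk netB.d M A init msg agg up) H (tailQuery q u) ℓ v =
          netB.h (auxKG H) y ℓ (u, v) := by
  classical
  refine ⟨netB.M, netB.A,
    (fun v qr => if h : (⟨0, Nat.zero_lt_two⟩ : Fin 2) ≠ qr.t
      then y (qr.u ⟨⟨0, Nat.zero_lt_two⟩, h⟩, v)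
      else y (qr.u ⟨⟨1, Nat.one_lt_two⟩, by
        simp only [not_not] at h
        rw [← h]
        decide⟩, v)),
    (fun ℓ r S _ => netB.msg ℓ r S), netB.agg, netB.up, ?_⟩
  intro ℓ hℓ u v
  clear hy hℓ
  induction ℓ generalizing v with
  | zero =>
      simp only [HCMPNN.h, HRMPNN.h]
      split <;> rfl
  | succ ℓ ih =>
      have hval : ((auxKG H).incid (u, v)).val = (H.incid v).val.map (pairMap u) := by
        rw [incid_auxKG, Finset.image_val,
          Multiset.dedup_eq_self.mpr ((H.incid v).nodup.map (pairMap_injective u))]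
      simp only [HCMPNN.h, HRMPNN.h, hval, Multiset.map_map, ih]
      rfl
end

section
/- Let G = (V, E, R, x, ζ) be a relational hypergraph with feature map x and a k-ary node coloring ζ : V^k → D satisfying generalized target node distinguishability, and fix a tail query q = (q, ũ, k) with q ∈ R, ar(q) = k. For every L ≥ 0 there exists an HC-MPNN restricted to tail predictions with L layers such that for all 0 ≤ ℓ ≤ L, hcwl_k^(ℓ) ≡ h_q^(ℓ) (the test coloring and the k-ary feature map (ũ, v) ↦ h_{v|(q,ũ,k)}^(ℓ) induce the same partition of V^k at every layer). -/
variable {V R D : Type} {ar : R → ℕ}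

/-- The last (tail) position `t = k` of a relation `q` of arity `k = ar q ≥ 1`. -/
def tailPos {R : Type} {ar : R → ℕ} (q : R) (hq : 1 ≤ ar q) : Fin (ar q) :=
  ⟨ar q - 1, by omega⟩

/-- A `k`-ary coloring `ζ(ut, v)` (with `ut` indexed by `ι ≅ Fin (k-1)`) satisfies
generalized target node distinguishability: for every `ut`, nodes in `ut` get colors
different from all nodes outside `ut`, and distinct nodes occurring in `ut` get
distinct colors. -/
def gtndK {V ι D : Type} (ζ : (ι → V) → V → D) : Prop :=
  ∀ ut : ι → V,
    (∀ (i : ι) (v : V), v ∉ Set.range ut → ζ ut (ut i) ≠ ζ ut v) ∧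
    (∀ i j : ι, ut i ≠ ut j → ζ ut (ut i) ≠ ζ ut (ut j))

/-- The test `hcwl_k` on a relational hypergraph `H` (with the canonical injective
`τ`), computing `k`-ary colorings `(ut, v) ↦ hcwl_k⁽ℓ⁾(ut, v)` from the initial `k`-ary
coloring `ζ`; the tuple `ut` is carried along unchanged. -/
def hcwlk {V R D : Type} [DecidableEq V] {ar : R → ℕ} (H : RelHG V R ar)
    {ι : Type} (ζ : (ι → V) → V → D) : (ℓ : ℕ) → (ι → V) → V → WLC D R ℓ
  | 0 => ζ
  | ℓ + 1 => fun ut v =>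
      ⟨hcwlk H ζ ℓ ut v,
        (H.incid v).val.map fun ei =>
          ({p : WLC D R ℓ × ℕ |
              ∃ j : Fin (ar ei.1.1), j ≠ ei.2 ∧
                p = (hcwlk H ζ ℓ ut (ei.1.2 j), (j : ℕ))},
            ei.1.1)⟩

/-!
The test `hcwl_k` is simulated exactly by a one-dimensional HC-MPNN. On a finite node set
only finitely many colors occur at each layer, so they can be coded injectively by reals.
Since message, aggregation and update functions are arbitrary, each layer can decode the
codes of its inputs, reproduce the `hcwl_k` refinement step, and re-code the result. The
features at layer `ℓ` are then an injective image of the colors at layer `ℓ`.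
-/

theorem Set.Finite.exists_injOn_fin_one_real {α : Type*} {S : Set α} (hS : S.Finite) :
    ∃ f : α → Fin 1 → ℝ, S.InjOn f := by
  obtain ⟨f, hf⟩ := Set.countable_iff_exists_injOn.mp hS.countable
  exact ⟨fun a _ => f a,
    fun a ha b hb hab => hf ha hb (Nat.cast_injective (R := ℝ) (congrFun hab 0))⟩

theorem Set.InjOn.extend_restrict_apply {α β γ : Type*} {φ : α → β} {T : Set α}
    (hφ : T.InjOn φ) (e : α → γ) (j : β → γ) {a : α} (ha : a ∈ T) :
    Function.extend (T.domRestrict φ) (T.domRestrict e) j (φ a) = e a :=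
  hφ.injective.extend_apply _ j ⟨a, ha⟩

theorem Set.InjOn.setOf_decode_eq {α β γ J : Type*} {f : α → β} {S : Set α}
    (hf : S.InjOn f) (P : J → Prop) (c : J → α) (hc : ∀ j, c j ∈ S) (n : J → γ) :
    {p : α × γ | p.1 ∈ S ∧ (f p.1, p.2) ∈ {p | ∃ j, P j ∧ p = (f (c j), n j)}} =
      {p | ∃ j, P j ∧ p = (c j, n j)} := by
  ext ⟨a, m⟩
  simp only [Set.mem_ofPred_eq, Prod.mk.injEq]
  constructor
  · rintro ⟨ha, j, hj, hfa, rfl⟩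
    exact ⟨j, hj, hf ha (hc j) hfa, rfl⟩
  · rintro ⟨j, hj, rfl, rfl⟩
    exact ⟨hc j, j, hj, rfl, rfl⟩

theorem Query.mk_injective (q : R) (t : Fin (ar q)) :
    Function.Injective (Query.mk q t : ({j // j ≠ t} → V) → Query V R ar) :=
  fun _ _ h => by injection h

section Simulation

variable [DecidableEq V] (H : RelHG V R ar)

section Colors

variable {ι : Type} (ζ : (ι → V) → V → D)

def hcwlkRange (ℓ : ℕ) : Set (WLC D R ℓ) :=
  Set.range fun p : (ι → V) × V => hcwlk H ζ ℓ p.1 p.2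

theorem hcwlk_mem_hcwlkRange (ℓ : ℕ) (ut : ι → V) (v : V) :
    hcwlk H ζ ℓ ut v ∈ hcwlkRange H ζ ℓ :=
  ⟨(ut, v), rfl⟩

variable [Finite V] [Finite ι]

theorem hcwlkRange_finite (ℓ : ℕ) : (hcwlkRange H ζ ℓ).Finite :=
  Set.finite_range _

noncomputable def hcwlkCode (ℓ : ℕ) : WLC D R ℓ → Fin 1 → ℝ :=
  (hcwlkRange_finite H ζ ℓ).exists_injOn_fin_one_real.choose

theorem hcwlkCode_injOn (ℓ : ℕ) : (hcwlkRange H ζ ℓ).InjOn (hcwlkCode H ζ ℓ) :=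
  (hcwlkRange_finite H ζ ℓ).exists_injOn_fin_one_real.choose_spec

noncomputable def hcwlkUpdateInput (ℓ : ℕ)
    (c : WLC D R ℓ × Multiset (Set (WLC D R ℓ × ℕ) × R)) :
    (Fin 1 → ℝ) × Multiset (Set (WLC D R ℓ × ℕ) × R) :=
  (hcwlkCode H ζ ℓ c.1, c.2)

theorem hcwlkUpdateInput_injOn (ℓ : ℕ) :
    (hcwlkRange H ζ (ℓ + 1)).InjOn (hcwlkUpdateInput H ζ ℓ) := by
  rintro _ ⟨⟨ut, v⟩, rfl⟩ _ ⟨⟨ut', v'⟩, rfl⟩ h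
  obtain ⟨h₁, h₂⟩ := Prod.ext_iff.mp h
  exact Prod.ext (hcwlkCode_injOn H ζ ℓ (hcwlk_mem_hcwlkRange H ζ ℓ ut v)
    (hcwlk_mem_hcwlkRange H ζ ℓ ut' v') h₁) h₂

end Colors

variable [Finite V] (q : R) (t : Fin (ar q)) (ζ : ({j // j ≠ t} → V) → V → D)

noncomputable def hcwlkNet : HCMPNN V R ar where
  d _ := 1
  M ℓ := Set (WLC D R ℓ × ℕ) × R
  A ℓ := Multiset (Set (WLC D R ℓ × ℕ) × R)
  init v := Function.extend (Query.mk q t) (fun ut => hcwlkCode H ζ 0 (ζ ut v)) fun _ _ => 0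
  msg ℓ r s _ := ({p | p.1 ∈ hcwlkRange H ζ ℓ ∧ (hcwlkCode H ζ ℓ p.1, p.2) ∈ s}, r)
  agg _ _ ms := ms
  up ℓ h ms :=
    Function.extend ((hcwlkRange H ζ (ℓ + 1)).domRestrict (hcwlkUpdateInput H ζ ℓ))
      ((hcwlkRange H ζ (ℓ + 1)).domRestrict (hcwlkCode H ζ (ℓ + 1))) (fun _ _ => 0) (h, ms)

theorem hcwlkNet_h (ℓ : ℕ) (ut : {j // j ≠ t} → V) (v : V) :
    (hcwlkNet H q t ζ).h H ⟨q, t, ut⟩ ℓ v = hcwlkCode H ζ ℓ (hcwlk H ζ ℓ ut v) := by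
  induction ℓ generalizing v with
  | zero =>
    exact (Query.mk_injective q t).extend_apply (fun ut => hcwlkCode H ζ 0 (ζ ut v))
      (fun _ _ => 0) ut
  | succ ℓ ih =>
    rw [HCMPNN.h]
    simp only [ih]
    rw [← (hcwlkUpdateInput_injOn H ζ ℓ).extend_restrict_apply (hcwlkCode H ζ (ℓ + 1))
      (fun _ _ => 0) (hcwlk_mem_hcwlkRange H ζ (ℓ + 1) ut v)]
    refine congrArg _ (Multiset.map_congr rfl fun ei _ => Prod.ext ?_ rfl)
    exact (hcwlkCode_injOn H ζ ℓ).setOf_decode_eq _ _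
      (fun _ => hcwlk_mem_hcwlkRange H ζ ℓ ut _) _

end Simulation

theorem exists_HCMPNN_matching_hcwlk_general
    {V R D : Type} [Fintype V] [DecidableEq V]
    {ar : R → ℕ} (H : RelHG V R ar)
    (q : R) (hq : 1 ≤ ar q)
    (ζ : ({j : Fin (ar q) // j ≠ tailPos q hq} → V) → V → D)
    (L : ℕ) :
    ∃ net : HCMPNN V R ar,
      ∀ ℓ ≤ L, ∀ (ut ut' : {j : Fin (ar q) // j ≠ tailPos q hq} → V) (v v' : V),
        hcwlk H ζ ℓ ut v = hcwlk H ζ ℓ ut' v' ↔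
          net.h H ⟨q, tailPos q hq, ut⟩ ℓ v = net.h H ⟨q, tailPos q hq, ut'⟩ ℓ v' := by
  refine ⟨hcwlkNet H q (tailPos q hq) ζ, fun ℓ _ ut ut' v v' => ?_⟩
  rw [hcwlkNet_h, hcwlkNet_h]
  exact ((hcwlkCode_injOn H ζ ℓ).eq_iff (hcwlk_mem_hcwlkRange H ζ ℓ ut v)
    (hcwlk_mem_hcwlkRange H ζ ℓ ut' v')).symm

/-- Let `G = (V, E, R, x, ζ)` be a relational hypergraph with
feature map `x` and a `k`-ary coloring `ζ` satisfying generalized target node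
distinguishability, and fix a tail query `(q, ut, k)` with `q ∈ R` of arity
`k = ar q`.  For every `L ≥ 0` there is an HC-MPNN restricted to tail predictions
with `L` layers such that for all `0 ≤ ℓ ≤ L`, `hcwl_k⁽ℓ⁾ ≡ h_q⁽ℓ⁾`: the test
coloring and the `k`-ary feature map `(ut, v) ↦ h⁽ℓ⁾_{v|(q,ut,k)}` induce the same
partition of `V^k` at every layer. -/
theorem exists_HCMPNN_matching_hcwlk
    {V R D : Type} [Fintype V] [DecidableEq V] [Fintype R] [DecidableEq R]
    {ar : R → ℕ} (H : RelHG V R ar) {d0 : ℕ} (x : V → Fin d0 → ℝ)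
    (q : R) (hq : 1 ≤ ar q)
    (ζ : ({j : Fin (ar q) // j ≠ tailPos q hq} → V) → V → D)
    (hζ : gtndK ζ)
    (L : ℕ) :
    ∃ net : HCMPNN V R ar,
      ∀ ℓ ≤ L, ∀ (ut ut' : {j : Fin (ar q) // j ≠ tailPos q hq} → V) (v v' : V),
        hcwlk H ζ ℓ ut v = hcwlk H ζ ℓ ut' v' ↔
          net.h H ⟨q, tailPos q hq, ut⟩ ℓ v = net.h H ⟨q, tailPos q hq, ut'⟩ ℓ v' :=
  exists_HCMPNN_matching_hcwlk_general H q hq ζ L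
end

section
/- Let G = (V, E, R, c, ζ) be a relational hypergraph with a k-ary node coloring ζ. For all ℓ ≥ 0, the k-ary coloring hcwl_k^(ℓ) computed on G coincides with the node coloring hrwl_1^(ℓ) computed on the auxiliary relational hypergraph G^k: for all (ũ, v), (ũ', v') ∈ V^k, hcwl_k^(ℓ)(G, ũ, v) = hcwl_k^(ℓ)(G, ũ', v') if and only if hrwl_1^(ℓ)(G^k, (ũ, v)) = hrwl_1^(ℓ)(G^k, (ũ', v')). -/
variable {V R D : Type} {ar : R → ℕ}

/-- The auxiliary relational hypergraph `G^k` of `G`: nodes are the tuples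
`(ut, v) ∈ V^k` (with `ut` indexed by `ι ≅ Fin (k-1)`), with the fact
`r((ut, v₁), …, (ut, v_m))` for every fact `r(v₁, …, v_m)` of `G` and every tuple
`ut`. -/
def auxHG {V R : Type} {ar : R → ℕ} [Fintype V] [DecidableEq V] [DecidableEq R]
    {ι : Type} [Fintype ι] [DecidableEq ι] (H : RelHG V R ar) :
    RelHG ((ι → V) × V) R ar where
  edges :=
    (H.edges ×ˢ (Finset.univ : Finset (ι → V))).image
      fun p => ⟨p.1.1, fun j => (p.2, p.1.2 j)⟩

/-- Lifting of an edge–position pair of `G` to one of `G^k`. -/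
def liftEP {V R : Type} {ar : R → ℕ} {ι : Type} (ut : ι → V) :
    (Σ e : Σ r : R, Fin (ar r) → V, Fin (ar e.1)) →
      (Σ e : Σ r : R, Fin (ar r) → ((ι → V) × V), Fin (ar e.1)) :=
  fun p => ⟨⟨p.1.1, fun j => (ut, p.1.2 j)⟩, p.2⟩

theorem liftEP_inj {V R : Type} {ar : R → ℕ} {ι : Type} (ut : ι → V) :
    Function.Injective (liftEP (R := R) (ar := ar) ut) := by
  rintro ⟨⟨r, f⟩, i⟩ ⟨⟨r', f'⟩, i'⟩ h
  simp only [liftEP, Sigma.mk.inj_iff] at h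
  obtain ⟨⟨rfl, hf⟩, hi⟩ := h
  have hf' : f = f' := by
    funext j
    have := congrFun (eq_of_heq hf) j
    exact congrArg Prod.snd this
  subst hf'
  simp_all

theorem incid_aux {V R : Type} {ar : R → ℕ} [Fintype V] [DecidableEq V]
    [DecidableEq R] {ι : Type} [Fintype ι] [DecidableEq ι] (H : RelHG V R ar)
    (ut : ι → V) (v : V) :
    ((auxHG (ι := ι) H).incid (ut, v)).val =
      (H.incid v).val.map (liftEP ut) := by
  have : (auxHG (ι := ι) H).incid (ut, v) =
      (H.incid v).map ⟨liftEP ut, liftEP_inj ut⟩ := by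
    ext q
    simp only [RelHG.incid, Finset.mem_map, Finset.mem_filter, Finset.mem_sigma,
      Finset.mem_univ, and_true, true_and, Function.Embedding.coeFn_mk, auxHG,
      Finset.mem_image, Finset.mem_product]
    constructor
    · obtain ⟨q1, q2⟩ := q
      rintro ⟨⟨⟨e, ut''⟩, he, hq⟩, hv⟩
      simp only at hq
      subst hq
      simp only at hv
      obtain ⟨rfl, rfl⟩ : ut'' = ut ∧ e.2 q2 = v := Prod.mk.injEq .. ▸ hv
      exact ⟨⟨e, q2⟩, ⟨he, rfl⟩, rfl⟩
    · rintro ⟨p, ⟨hp, hpv⟩, rfl⟩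
      refine ⟨⟨(p.1, ut), ?_, rfl⟩, by simpa [liftEP] using hpv⟩
      simpa using hp
  rw [this, Finset.map_val]
  rfl

theorem hrwl_aux_eq {V R D : Type} {ar : R → ℕ} [Fintype V] [DecidableEq V]
    [DecidableEq R] {ι : Type} [Fintype ι] [DecidableEq ι] (H : RelHG V R ar)
    (ζ : (ι → V) → V → D) (ℓ : ℕ) (ut : ι → V) (v : V) :
    RelHG.hrwl (auxHG (ι := ι) H) (fun p => ζ p.1 p.2) ℓ (ut, v) =
      hcwlk H ζ ℓ ut v := by
  induction ℓ generalizing v with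
  | zero => rfl
  | succ ℓ ih =>
    show (⟨_, _⟩ : WLC D R ℓ × _) = ⟨_, _⟩
    refine Prod.ext (ih v) ?_
    show Multiset.map _ ((auxHG (ι := ι) H).incid (ut, v)).val = _
    rw [incid_aux, Multiset.map_map]
    refine Multiset.map_congr rfl fun p _ => ?_
    simp only [Function.comp_apply, liftEP]
    refine congrArg (·, p.1.1) ?_
    ext x
    constructor
    · rintro ⟨j, hj, rfl⟩; exact ⟨j, hj, by rw [ih]⟩
    · rintro ⟨j, hj, rfl⟩; exact ⟨j, hj, by rw [ih]⟩

/-- Let `G = (V, E, R, c, ζ)` be a relational hypergraph with a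
`k`-ary coloring `ζ`.  For all `ℓ ≥ 0`, the `k`-ary coloring `hcwl_k⁽ℓ⁾` computed on
`G` coincides with the node coloring `hrwl₁⁽ℓ⁾` computed on the auxiliary relational
hypergraph `G^k` (with node coloring `c_ζ((ut, v)) = ζ(ut, v)`): they induce the same
partition of `V^k`. -/
theorem hcwlk_coincides_hrwl_on_auxHG
    {V R C D : Type} [Fintype V] [DecidableEq V] [Fintype R] [DecidableEq R]
    {ar : R → ℕ} (H : RelHG V R ar) (c : V → C) {km : ℕ}
    (ζ : (Fin km → V) → V → D) (ℓ : ℕ) :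
    ∀ (ut ut' : Fin km → V) (v v' : V),
      hcwlk H ζ ℓ ut v = hcwlk H ζ ℓ ut' v' ↔
        RelHG.hrwl (auxHG (ι := Fin km) H) (fun p => ζ p.1 p.2) ℓ (ut, v) =
          RelHG.hrwl (auxHG (ι := Fin km) H) (fun p => ζ p.1 p.2) ℓ (ut', v') := by
  intro ut ut' v v'
  rw [hrwl_aux_eq, hrwl_aux_eq]
end
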